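/- arXiv:2202.05547 — 9 statements merged into one kernel-verified Lean document; each statement's English description precedes it below -/
import Mathlib

section
/- Let n, m ≥ 1 and let X be a real n×m matrix. Then σ(Ω + 2I) + null(Ω + 2I) equals the number of eigenvalues of Ω, counted with multiplicity, lying in the closed interval [−2, 2]. -/
/-!
Conjugating `Ω = [[0, X], [Xᵀ, 0]]` by `D = [[I, 0], [0, -I]]` gives `-Ω`, so `Ω` and `-Ω` have the
same characteristic polynomial and the spectrum of `Ω` is symmetric about `0`. The eigenvalues of
`Ω + 2I` are those of `Ω` shifted by `2`, hence its signature plus nullity is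
`#{λ > -2} - #{λ < -2} + #{λ = -2} = #{λ ≥ -2} - #{λ > 2}`, which is `#{λ ∈ [-2, 2]}`.
-/

open Matrix

namespace Multiset

theorem countP_eq_countP_and_add_countP_and_not {α : Type*} (s : Multiset α) (p q : α → Prop)
    [DecidablePred p] [DecidablePred q] :
    s.countP p = s.countP (fun a => p a ∧ q a) + s.countP (fun a => p a ∧ ¬q a) := by
  rw [countP_eq_countP_filter_add s p q, countP_filter, countP_filter]

theorem countP_lt_neg_eq_countP_lt_of_map_neg_eq {s : Multiset ℝ} (hs : s.map Neg.neg = s)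
    (c : ℝ) : s.countP (· < -c) = s.countP (c < ·) := by
  conv_lhs => rw [← hs]
  rw [countP_map, ← countP_eq_card_filter]
  exact countP_congr rfl fun x _ => by simp

theorem countP_mem_Icc_eq_of_map_neg_eq {s : Multiset ℝ} (hs : s.map Neg.neg = s) {c : ℝ}
    (hc : 0 ≤ c) :
    (s.countP (· ∈ Set.Icc (-c) c) : ℤ) = (s.map (· + c)).countP (0 < ·)
      - (s.map (· + c)).countP (· < 0) + (s.map (· + c)).countP (· = 0) := by
  have h_le : s.countP (-c ≤ ·) = s.countP (-c < ·) + s.countP (· = -c) := by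
    rw [countP_eq_countP_and_add_countP_and_not s _ (· = -c), add_comm]
    congr 1 <;> refine countP_congr rfl fun x _ => propext ?_
    · exact ⟨fun h => lt_of_le_of_ne h.1 (Ne.symm h.2), fun h => ⟨h.le, h.ne'⟩⟩
    · exact ⟨fun h => h.2, fun h => ⟨h.ge, h⟩⟩
  have h_Icc : s.countP (-c ≤ ·) = s.countP (· ∈ Set.Icc (-c) c) + s.countP (c < ·) := by
    rw [countP_eq_countP_and_add_countP_and_not s _ (· ≤ c)]
    congr 1
    refine countP_congr rfl fun x _ => propext ?_
    simp only [not_le]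
    exact ⟨fun h => h.2, fun h => ⟨by linarith, h⟩⟩
  simp only [countP_map, ← countP_eq_card_filter, ← neg_lt_iff_pos_add, ← lt_neg_iff_add_neg,
    add_eq_zero_iff_eq_neg]
  rw [countP_lt_neg_eq_countP_lt_of_map_neg_eq hs]
  omega

end Multiset

namespace Matrix

theorem charpoly_neg_fromBlocks_zero {R n m : Type*} [CommRing R] [Fintype n] [Fintype m]
    [DecidableEq n] [DecidableEq m] (B : Matrix n m R) (C : Matrix m n R) :
    (-fromBlocks 0 B C 0).charpoly = (fromBlocks 0 B C 0).charpoly := by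
  set D : Matrix (n ⊕ m) (n ⊕ m) R := fromBlocks 1 0 0 (-1)
  have hDD : D * D = 1 := by simp [D, fromBlocks_multiply, fromBlocks_one]
  have hconj : -fromBlocks 0 B C 0 = D * (fromBlocks 0 B C 0 * D) := by
    simp [D, fromBlocks_multiply, fromBlocks_neg]
  rw [hconj, charpoly_mul_comm, mul_assoc, hDD, mul_one]

namespace IsHermitian

variable {𝕜 n : Type*} [RCLike 𝕜] [Fintype n] [DecidableEq n] {A B : Matrix n n 𝕜}

theorem map_eigenvalues_of_cfc_eq (hA : A.IsHermitian) (hB : B.IsHermitian) {f : ℝ → ℝ}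
    (hfB : cfc f A = B) :
    Finset.univ.val.map hB.eigenvalues = Finset.univ.val.map (f ∘ hA.eigenvalues) := by
  apply Multiset.map_injective (RCLike.ofReal_injective (K := 𝕜))
  rw [Multiset.map_map, Multiset.map_map, ← hB.roots_charpoly_eq_eigenvalues, ← hfB,
    hA.charpoly_cfc_eq,
    Polynomial.roots_prod _ _ (by simp [Finset.prod_ne_zero_iff, Polynomial.X_sub_C_ne_zero])]
  simp

theorem finrank_ker_mulVecLin (hA : A.IsHermitian) :
    Module.finrank 𝕜 (LinearMap.ker A.mulVecLin) = Fintype.card {i // hA.eigenvalues i = 0} := by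
  have h_rank_nullity := LinearMap.finrank_range_add_finrank_ker A.mulVecLin
  have h_rank : Module.finrank 𝕜 (LinearMap.range A.mulVecLin) =
      Fintype.card n - Fintype.card {i // hA.eigenvalues i = 0} := by
    rw [← rank, hA.rank_eq_card_non_zero_eigs, Fintype.card_subtype_compl]
  rw [Module.finrank_fintype_fun_eq_card] at h_rank_nullity
  have := Fintype.card_subtype_le fun i => hA.eigenvalues i = 0
  omega

end IsHermitian

end Matrix

theorem signature_plus_nullity_eq_card_eigenvalues_in_Icc_general
    (n m : ℕ)
    (X : Matrix (Fin n) (Fin m) ℝ)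
    (Ω : Matrix (Fin n ⊕ Fin m) (Fin n ⊕ Fin m) ℝ)
    (hΩdef : Ω = Matrix.fromBlocks 0 X Xᵀ 0)
    (hΩ : Ω.IsHermitian)
    (hA : (Ω + (2 : ℝ) • 1).IsHermitian) :
    ((Finset.univ.filter fun i => 0 < hA.eigenvalues i).card : ℤ)
        - ((Finset.univ.filter fun i => hA.eigenvalues i < 0).card : ℤ)
        + (Module.finrank ℝ ↥(LinearMap.ker (Ω + (2 : ℝ) • 1).mulVecLin) : ℤ)
      = ((Finset.univ.filter fun i => hΩ.eigenvalues i ∈ Set.Icc (-2 : ℝ) 2).card : ℤ) := by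
  set s := Finset.univ.val.map hΩ.eigenvalues
  have h_shift : Finset.univ.val.map hA.eigenvalues = s.map (· + 2) := by
    rw [Multiset.map_map]
    exact hΩ.map_eigenvalues_of_cfc_eq hA
      (by rw [cfc_add_const 2 (fun x => x) Ω, cfc_id' ℝ Ω, Algebra.algebraMap_eq_smul_one])
  have h_symm : s.map Neg.neg = s := by
    have h_neg_eigenvalues : hΩ.neg.eigenvalues = hΩ.eigenvalues :=
      (IsHermitian.eigenvalues_eq_eigenvalues_iff _ _).2
        (hΩdef ▸ charpoly_neg_fromBlocks_zero X Xᵀ)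
    rw [Multiset.map_map, ← hΩ.map_eigenvalues_of_cfc_eq hΩ.neg (cfc_neg_id Ω),
      h_neg_eigenvalues]
  have h_count := Multiset.countP_mem_Icc_eq_of_map_neg_eq h_symm zero_le_two
  rw [← h_shift] at h_count
  simp only [s, Multiset.countP_map] at h_count
  rw [hA.finrank_ker_mulVecLin, Fintype.card_subtype]
  exact h_count.symm

/-- For a real `n × m` matrix `X` and `Ω = [[0, X], [Xᵀ, 0]]`, the signature plus the
nullity of `Ω + 2I` equals the number of eigenvalues of `Ω` (with multiplicity) in `[-2, 2]`. -/
theorem signature_plus_nullity_eq_card_eigenvalues_in_Icc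
    (n m : ℕ) (hn : 1 ≤ n) (hm : 1 ≤ m)
    (X : Matrix (Fin n) (Fin m) ℝ)
    (Ω : Matrix (Fin n ⊕ Fin m) (Fin n ⊕ Fin m) ℝ)
    (hΩdef : Ω = Matrix.fromBlocks 0 X Xᵀ 0)
    (hΩ : Ω.IsHermitian)
    (hA : (Ω + (2 : ℝ) • 1).IsHermitian) :
    ((Finset.univ.filter fun i => 0 < hA.eigenvalues i).card : ℤ)
        - ((Finset.univ.filter fun i => hA.eigenvalues i < 0).card : ℤ)
        + (Module.finrank ℝ ↥(LinearMap.ker (Ω + (2 : ℝ) • 1).mulVecLin) : ℤ)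
      = ((Finset.univ.filter fun i => hΩ.eigenvalues i ∈ Set.Icc (-2 : ℝ) 2).card : ℤ) :=
  signature_plus_nullity_eq_card_eigenvalues_in_Icc_general n m X Ω hΩdef hΩ hA
end

section
/- Let n, m ≥ 1 and let X be a real n×m matrix. Let μ₁, …, μ_{n+m} be the complex roots (with multiplicity) of the characteristic polynomial of Ω, and let λ₁, …, λ_{n+m} be the complex roots (with multiplicity) of the characteristic polynomial of M (all of which are nonzero, since det M = 1). Then the multiset {μᵢ² : 1 ≤ i ≤ n+m} equals the multiset {2 − λᵢ − λᵢ⁻¹ : 1 ≤ i ≤ n+m}. -/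
/-! Over an algebraically closed field `det (p A) = ∏ p λ` over the eigenvalues `λ` of `A`
(factor `p` into linear terms); applied to `s - p` this is the spectral mapping theorem
`roots (charpoly (p A)) = p (roots (charpoly A))`, which gives the eigenvalues of `Ω²`.
Blockwise, `M⁻¹ = [[1, 0], [Xᵀ, 1]] [[1, -X], [0, 1]]` and `Ω² = 2 - M - M⁻¹`. The Laurent
polynomial `2 - λ - λ⁻¹` is reduced to a polynomial by multiplying with `M`:
`M (s - (2 - M - M⁻¹)) = M² + (s - 2) M + 1`, whose determinant is
`∏ λ (s - (2 - λ - λ⁻¹))`. -/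

open Polynomial Matrix

namespace Matrix

variable {K ι : Type*} [Field K] [IsAlgClosed K] [Fintype ι] [DecidableEq ι]

theorem card_roots_charpoly (A : Matrix ι ι K) : A.charpoly.roots.card = Fintype.card ι := by
  rw [← (IsAlgClosed.splits _).natDegree_eq_card_roots, charpoly_natDegree_eq_dim]

theorem det_scalar_sub_eq_prod_roots_charpoly (A : Matrix ι ι K) (z : K) :
    (scalar ι z - A).det = (A.charpoly.roots.map (z - ·)).prod := by
  rw [← eval_charpoly, (IsAlgClosed.splits _).eval_eq_prod_roots, A.charpoly_monic.leadingCoeff,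
    one_mul]

theorem det_sub_scalar_eq_prod_roots_charpoly (A : Matrix ι ι K) (z : K) :
    (A - scalar ι z).det = (A.charpoly.roots.map (· - z)).prod := by
  rw [← neg_sub, det_neg, det_scalar_sub_eq_prod_roots_charpoly, ← card_roots_charpoly A,
    ← Multiset.card_map (z - ·), ← Multiset.prod_map_neg, Multiset.map_map]
  simp

theorem det_aeval_eq_prod_roots_charpoly (A : Matrix ι ι K) (p : K[X]) :
    (aeval A p).det = (A.charpoly.roots.map p.eval).prod := by
  have hp := IsAlgClosed.splits p
  let detAeval : K[X] →* K := detMonoidHom.comp (aeval A).toMonoidHom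
  change detAeval p = _
  conv_lhs => rw [hp.eq_prod_roots]
  simp_rw [hp.eval_eq_prod_roots, Multiset.prod_map_mul, Multiset.map_const',
    Multiset.prod_replicate, card_roots_charpoly]
  rw [map_mul, map_multiset_prod, Multiset.map_map, Multiset.prod_map_prod_map]
  congr 1
  · simp [detAeval, Algebra.algebraMap_eq_smul_one]
  · congr 1
    refine Multiset.map_congr rfl fun z _ => ?_
    show (aeval A (X - C z)).det = _
    rw [map_sub, aeval_X, aeval_C]
    exact det_sub_scalar_eq_prod_roots_charpoly A z

theorem roots_charpoly_eq_of_forall_det_scalar_sub {B : Matrix ι ι K} {S : Multiset K}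
    (h : ∀ s, (scalar ι s - B).det = (S.map (s - ·)).prod) : B.charpoly.roots = S := by
  have : B.charpoly = (S.map (X - C ·)).prod :=
    Polynomial.funext fun s => by
      rw [eval_charpoly, h, eval_multiset_prod, Multiset.map_map]
      simp
  rw [this, roots_multiset_prod_X_sub_C]

theorem roots_charpoly_aeval (A : Matrix ι ι K) (p : K[X]) :
    (aeval A p).charpoly.roots = A.charpoly.roots.map p.eval := by
  refine roots_charpoly_eq_of_forall_det_scalar_sub fun s => ?_
  rw [show scalar ι s = aeval A (C s) from (aeval_C A s).symm]
  rw [← map_sub, det_aeval_eq_prod_roots_charpoly, Multiset.map_map]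
  simp

theorem roots_charpoly_pow (A : Matrix ι ι K) (k : ℕ) :
    (A ^ k).charpoly.roots = A.charpoly.roots.map (· ^ k) := by
  simpa using roots_charpoly_aeval A (X ^ k)

theorem ne_zero_of_mem_roots_charpoly {A : Matrix ι ι K} (hA : A.det ≠ 0) {l : K}
    (hl : l ∈ A.charpoly.roots) : l ≠ 0 := by
  rintro rfl
  exact hA (det_eq_prod_roots_charpoly A ▸ Multiset.prod_eq_zero hl)

theorem roots_charpoly_two_sub_sub_inv {M : Matrix ι ι K} (hM : IsUnit M.det) :
    (2 - M - M⁻¹).charpoly.roots = M.charpoly.roots.map (fun l => 2 - l - l⁻¹) := by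
  refine roots_charpoly_eq_of_forall_det_scalar_sub fun s => ?_
  have hfactor : M * (scalar ι s - (2 - M - M⁻¹)) = aeval M (X ^ 2 + C (s - 2) * X + 1) := by
    rw [show scalar ι s = algebraMap K _ s from rfl]
    simp only [map_add, map_mul, aeval_X, aeval_C, map_pow, map_one, map_sub, map_ofNat,
      mul_sub, mul_nonsing_inv _ hM, ← Algebra.commutes s M]
    noncomm_ring
  rw [Multiset.map_map]
  apply mul_left_cancel₀ hM.ne_zero
  calc M.det * (scalar ι s - (2 - M - M⁻¹)).det
      = (aeval M (X ^ 2 + C (s - 2) * X + 1)).det := by rw [← det_mul, hfactor]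
    _ = (M.charpoly.roots.map fun l => l * (s - (2 - l - l⁻¹))).prod := by
      rw [det_aeval_eq_prod_roots_charpoly]
      refine congrArg _ (Multiset.map_congr rfl fun l hl => ?_)
      have hl0 := ne_zero_of_mem_roots_charpoly hM.ne_zero hl
      simp only [eval_add, eval_pow, eval_X, eval_mul, eval_C, eval_one]
      field_simp
      ring
    _ = M.det * (M.charpoly.roots.map fun l => s - (2 - l - l⁻¹)).prod := by
      rw [Multiset.prod_map_mul, Multiset.map_id', det_eq_prod_roots_charpoly]

section Blocks

variable {R m n : Type*} [Ring R] [Fintype m] [Fintype n] [DecidableEq m] [DecidableEq n]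

theorem fromBlocks_unitriangular_mul_inverse (Y : Matrix m n R) (Z : Matrix n m R) :
    fromBlocks 1 Y 0 1 * fromBlocks 1 0 (-Z) 1 * (fromBlocks 1 0 Z 1 * fromBlocks 1 (-Y) 0 1) =
      1 := by
  have hlower :
      fromBlocks 1 0 (-Z) 1 * fromBlocks 1 0 Z 1 = (1 : Matrix (m ⊕ n) (m ⊕ n) R) := by
    simp [fromBlocks_multiply]
  have hupper :
      fromBlocks 1 Y 0 1 * fromBlocks 1 (-Y) 0 1 = (1 : Matrix (m ⊕ n) (m ⊕ n) R) := by
    simp [fromBlocks_multiply]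
  rw [mul_assoc, ← mul_assoc (fromBlocks 1 0 (-Z) 1), hlower, one_mul, hupper]

theorem fromBlocks_zero_mul_self_eq_two_sub (Y : Matrix m n R) (Z : Matrix n m R) :
    fromBlocks 0 Y Z 0 * fromBlocks 0 Y Z 0 =
      2 - fromBlocks 1 Y 0 1 * fromBlocks 1 0 (-Z) 1 -
        fromBlocks 1 0 Z 1 * fromBlocks 1 (-Y) 0 1 := by
  rw [eq_sub_iff_add_eq, eq_sub_iff_add_eq, ← one_add_one_eq_two, ← fromBlocks_one]
  simp only [fromBlocks_multiply, fromBlocks_add, Matrix.mul_one, Matrix.one_mul, Matrix.mul_zero,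
    Matrix.zero_mul, Matrix.mul_neg, add_zero, zero_add]
  congr 1 <;> abel

end Blocks

end Matrix

theorem eigenvalue_multiset_correspondence_general
    (n m : ℕ)
    (X : Matrix (Fin n) (Fin m) ℝ)
    (Ω M : Matrix (Fin n ⊕ Fin m) (Fin n ⊕ Fin m) ℂ)
    (hΩ : Ω = (Matrix.fromBlocks 0 X Xᵀ 0).map (algebraMap ℝ ℂ))
    (hM : M = (Matrix.fromBlocks 1 X 0 1 * Matrix.fromBlocks 1 0 (-Xᵀ) 1).map
      (algebraMap ℝ ℂ)) :
    (∀ l ∈ M.charpoly.roots, l ≠ 0) ∧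
      Ω.charpoly.roots.map (fun μ => μ ^ 2)
        = M.charpoly.roots.map (fun l => 2 - l - l⁻¹) := by
  set Y := X.map (algebraMap ℝ ℂ)
  have hΩY : Ω = fromBlocks 0 Y Yᵀ 0 := by
    rw [hΩ, fromBlocks_map]
    simp [Y, transpose_map]
  have hMY : M = fromBlocks 1 Y 0 1 * fromBlocks 1 0 (-Yᵀ) 1 := by
    rw [hM, Matrix.map_mul, fromBlocks_map, fromBlocks_map, Matrix.map_neg _ (map_neg _)]
    simp [Y, transpose_map]
  have hMN := hMY ▸ fromBlocks_unitriangular_mul_inverse Y Yᵀ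
  have hdet : IsUnit M.det := isUnit_det_of_right_inverse hMN
  refine ⟨fun l hl => ne_zero_of_mem_roots_charpoly hdet.ne_zero hl, ?_⟩
  rw [← roots_charpoly_pow, ← roots_charpoly_two_sub_sub_inv hdet, inv_eq_right_inv hMN, hΩY,
    hMY, sq, fromBlocks_zero_mul_self_eq_two_sub]

/-- For a real `n × m` matrix `X`, with `Ω = [[0, X], [Xᵀ, 0]]` and
`M = [[I, X], [0, I]] * [[I, 0], [-Xᵀ, I]]`, the complex roots (with multiplicity) of the
characteristic polynomials satisfy: all roots `λ` of `charpoly M` are nonzero, and the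
multiset `{μ² : μ root of charpoly Ω}` equals the multiset
`{2 - λ - λ⁻¹ : λ root of charpoly M}`. -/
theorem eigenvalue_multiset_correspondence
    (n m : ℕ) (hn : 1 ≤ n) (hm : 1 ≤ m)
    (X : Matrix (Fin n) (Fin m) ℝ)
    (Ω M : Matrix (Fin n ⊕ Fin m) (Fin n ⊕ Fin m) ℂ)
    (hΩ : Ω = (Matrix.fromBlocks 0 X Xᵀ 0).map (algebraMap ℝ ℂ))
    (hM : M = (Matrix.fromBlocks 1 X 0 1 * Matrix.fromBlocks 1 0 (-Xᵀ) 1).map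
      (algebraMap ℝ ℂ)) :
    (∀ l ∈ M.charpoly.roots, l ≠ 0) ∧
      Ω.charpoly.roots.map (fun μ => μ ^ 2)
        = M.charpoly.roots.map (fun l => 2 - l - l⁻¹) :=
  eigenvalue_multiset_correspondence_general n m X Ω M hΩ hM
end

section
/- Let λ > 1 be a real number that is algebraic over ℚ, with minimal polynomial P over ℚ. Suppose P has a complex root of absolute value 1. Then λ⁻¹ is also a root of P (equivalently, P is reciprocal), so λ and λ⁻¹ are Galois conjugates, the field extension ℚ(λ) : ℚ(λ + λ⁻¹) has degree 2, and if λ + λ⁻¹ has degree d over ℚ then λ has degree 2d over ℚ. -/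
open IntermediateField Polynomial

/-! If `z` is a root of the minimal polynomial `P` of `λ` with `‖z‖ = 1`, then `z⁻¹ = z̄` is a
root as well, so the irreducible `P` shares the root `z⁻¹` with its reverse and divides it;
hence `λ⁻¹` is a root of `P`. The `ℚ`-embedding of `ℚ(λ)` sending `λ ↦ λ⁻¹ ≠ λ` fixes
`μ = λ + λ⁻¹`, so `λ ∉ ℚ(μ)`; since `λ` is a root of `X² - μX + 1`, `[ℚ(μ)(λ) : ℚ(μ)] = 2`,
and the tower law gives the degree formula. -/

section Reverse

variable {K L : Type*} [Field K] [Field L] [Algebra K L]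

theorem aeval_inv_reverse_eq_zero_iff {P : K[X]} {x : L} (hx : x ≠ 0) :
    aeval x⁻¹ P.reverse = 0 ↔ aeval x P = 0 := by
  let := invertibleOfNonzero hx
  simpa only [aeval_def, invOf_eq_inv] using eval₂_reverse_eq_zero_iff (algebraMap K L) x P

theorem aeval_inv_eq_zero_of_dvd_reverse {P : K[X]} (hP : P ∣ P.reverse) {x : L}
    (hx : aeval x P = 0) : aeval x⁻¹ P = 0 := by
  rcases eq_or_ne x 0 with rfl | hx0
  · rwa [inv_zero]
  obtain ⟨q, hq⟩ := hP
  rw [← aeval_inv_reverse_eq_zero_iff (inv_ne_zero hx0), inv_inv, hq, map_mul, hx, zero_mul]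

theorem dvd_reverse_of_aeval_inv_eq_zero {P : K[X]} (hP : Irreducible P) {z : L} (hz0 : z ≠ 0)
    (hz : aeval z P = 0) (hzinv : aeval z⁻¹ P = 0) : P ∣ P.reverse := by
  have hint : IsIntegral K z⁻¹ := IsAlgebraic.isIntegral ⟨P, hP.ne_zero, hzinv⟩
  have hmin : minpoly K z⁻¹ ∣ P := minpoly.dvd K z⁻¹ hzinv
  exact (minpoly.irreducible hint).dvd_symm hP hmin |>.trans <|
    minpoly.dvd K z⁻¹ ((aeval_inv_reverse_eq_zero_iff hz0).mpr hz)

end Reverse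

theorem aeval_inv_eq_zero_of_norm_eq_one {𝕜 : Type*} [RCLike 𝕜] {P : ℝ[X]} {z : 𝕜}
    (hz : ‖z‖ = 1) (h : aeval z P = 0) : aeval z⁻¹ P = 0 := by
  rw [RCLike.inv_eq_conj hz, Polynomial.aeval_conj, h, map_zero]

section Adjoin

variable {K L : Type*} [Field K] [Field L] [Algebra K L]

theorem add_inv_mem_adjoin_simple (x : L) : x + x⁻¹ ∈ K⟮x⟯ :=
  add_mem (mem_adjoin_simple_self K x) (inv_mem (mem_adjoin_simple_self K x))

theorem notMem_adjoin_simple_of_algHom {x y : L} (hy : y ∈ K⟮x⟯) (σ : K⟮x⟯ →ₐ[K] L)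
    (hσy : σ ⟨y, hy⟩ = y) (hσx : σ (AdjoinSimple.gen K x) ≠ x) : x ∉ K⟮y⟯ := by
  intro hx
  have hle : K⟮y⟯ ≤ K⟮x⟯ := adjoin_simple_le_iff.mpr hy
  have hfix : σ.comp (inclusion hle) = K⟮x⟯.val.comp (inclusion hle) :=
    adjoin_algHom_ext K fun _ h ↦ by
      rw [Set.mem_singleton_iff] at h
      subst h
      exact hσy
  exact hσx (DFunLike.congr_fun hfix ⟨x, hx⟩)

theorem notMem_adjoin_add_inv {x : L} (hx : IsIntegral K x)
    (hinv : aeval x⁻¹ (minpoly K x) = 0) (hne : x⁻¹ ≠ x) : x ∉ K⟮x + x⁻¹⟯ := by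
  let σ : K⟮x⟯ →ₐ[K] L := (algHomAdjoinIntegralEquiv K hx).symm
    ⟨x⁻¹, mem_aroots.mpr ⟨minpoly.ne_zero hx, hinv⟩⟩
  have hσx : σ (AdjoinSimple.gen K x) = x⁻¹ := algHomAdjoinIntegralEquiv_symm_apply_gen K hx _
  have hy := add_inv_mem_adjoin_simple (K := K) x
  refine notMem_adjoin_simple_of_algHom hy σ ?_ (hσx ▸ hne)
  have hgen : (⟨x + x⁻¹, hy⟩ : K⟮x⟯) = AdjoinSimple.gen K x + (AdjoinSimple.gen K x)⁻¹ := rfl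
  rw [hgen, map_add, map_inv₀, hσx, inv_inv, add_comm]

theorem finrank_adjoin_eq_two_of_add_inv {F : Type*} [Field F] [Algebra F L] {x : L}
    (hx0 : x ≠ 0) {c : F} (hc : algebraMap F L c = x + x⁻¹)
    (hx : x ∉ (algebraMap F L).range) : Module.finrank F F⟮x⟯ = 2 := by
  set q : F[X] := X ^ 2 - C c * X + 1
  have hq : q.Monic := by unfold q; monicity!
  have hqdeg : q.natDegree = 2 := by unfold q; compute_degree!
  have hqx : aeval x q = 0 := by
    simp only [q, map_add, map_sub, map_mul, map_pow, map_one, aeval_X, aeval_C, hc]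
    field_simp
    ring
  have hint : IsIntegral F x := ⟨q, hq, by rwa [aeval_def] at hqx⟩
  have hle : (minpoly F x).natDegree ≤ 2 :=
    hqdeg ▸ natDegree_le_of_dvd (minpoly.dvd F x hqx) hq.ne_zero
  have hge : 2 ≤ (minpoly F x).natDegree := (minpoly.two_le_natDegree_iff hint).mpr hx
  rw [adjoin.finrank hint]
  omega

theorem finrank_mul_finrank_adjoin_simple {x y : L} (hy : y ∈ K⟮x⟯) :
    Module.finrank K K⟮y⟯ * Module.finrank K⟮y⟯ K⟮y⟯⟮x⟯ = Module.finrank K K⟮x⟯ := by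
  have htower : (K⟮y⟯⟮x⟯).restrictScalars K = K⟮x⟯ := by
    rw [adjoin_simple_adjoin_simple]
    refine le_antisymm (adjoin_le_iff.mpr ?_) (adjoin.mono K _ _ (by simp))
    simp [Set.insert_subset_iff, hy]
  rw [Module.finrank_mul_finrank, ← htower]
  rfl

end Adjoin

/-- If `λ > 1` is a real algebraic number whose minimal polynomial over `ℚ` has a complex
root of absolute value `1`, then `λ⁻¹` is also a root of that minimal polynomial (so `λ`
and `λ⁻¹` are Galois conjugates, i.e. have the same minimal polynomial), the field
extension `ℚ(λ) : ℚ(λ + λ⁻¹)` has degree `2`, and the degree of `λ` over `ℚ` is twice the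
degree of `λ + λ⁻¹` over `ℚ`. -/
theorem nonsplitting_from_root_on_unit_circle
    (lam : ℝ) (hlam : 1 < lam) (halg : IsAlgebraic ℚ lam)
    (hcirc : ∃ z : ℂ, ‖z‖ = 1 ∧ Polynomial.aeval z (minpoly ℚ lam) = 0) :
    Polynomial.aeval lam⁻¹ (minpoly ℚ lam) = 0 ∧
    minpoly ℚ lam⁻¹ = minpoly ℚ lam ∧
    Module.finrank (↥(ℚ⟮lam + lam⁻¹⟯ : IntermediateField ℚ ℝ))
      ↥((ℚ⟮lam + lam⁻¹⟯ : IntermediateField ℚ ℝ)⟮lam⟯) = 2 ∧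
    (minpoly ℚ lam).natDegree = 2 * (minpoly ℚ (lam + lam⁻¹)).natDegree := by
  have hint : IsIntegral ℚ lam := halg.isIntegral
  obtain ⟨z, hz1, hz⟩ := hcirc
  have hzinv : aeval z⁻¹ (minpoly ℚ lam) = 0 := by
    rw [← aeval_map_algebraMap ℝ] at hz ⊢
    exact aeval_inv_eq_zero_of_norm_eq_one hz1 hz
  have hz0 : z ≠ 0 := norm_ne_zero_iff.mp (hz1 ▸ one_ne_zero)
  have hrecip : minpoly ℚ lam ∣ (minpoly ℚ lam).reverse :=
    dvd_reverse_of_aeval_inv_eq_zero (minpoly.irreducible hint) hz0 hz hzinv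
  have hlaminv : aeval lam⁻¹ (minpoly ℚ lam) = 0 :=
    aeval_inv_eq_zero_of_dvd_reverse hrecip (minpoly.aeval ℚ lam)
  have hne : lam⁻¹ ≠ lam := (inv_lt_one_of_one_lt₀ hlam |>.trans hlam).ne
  have hnotmem : lam ∉ ℚ⟮lam + lam⁻¹⟯ := notMem_adjoin_add_inv hint hlaminv hne
  have hfin : Module.finrank ℚ⟮lam + lam⁻¹⟯ ℚ⟮lam + lam⁻¹⟯⟮lam⟯ = 2 :=
    finrank_adjoin_eq_two_of_add_inv (by positivity) (AdjoinSimple.algebraMap_gen ℚ _)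
      fun ⟨c, hc⟩ ↦ hnotmem (Set.mem_of_eq_of_mem hc.symm c.2)
  have hsum : IsIntegral ℚ (lam + lam⁻¹) := hint.add ⟨_, minpoly.monic hint, hlaminv⟩
  refine ⟨hlaminv, (minpoly.eq_of_irreducible_of_monic (minpoly.irreducible hint) hlaminv
    (minpoly.monic hint)).symm, hfin, ?_⟩
  rw [← adjoin.finrank hint, ← adjoin.finrank hsum, ← hfin, mul_comm,
    finrank_mul_finrank_adjoin_simple (add_inv_mem_adjoin_simple lam)]
end

section
/- Let k ≥ 1, and let y₁, …, y_k be pairwise distinct integers and c₁, …, c_k positive integers. Then the polynomial p(t, y) = −y²·∏_{i=1}^{k}(t − yᵢ) + t·∏_{i=1}^{k}(t − yᵢ) − Σ_{i=1}^{k} cᵢ·∏_{j≠i}(t − y_j) is irreducible in ℤ[t, y]. -/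
open MvPolynomial

namespace TraceIrredAux

open Polynomial

/-- Iso `ℤ[t,y] ≃ (ℤ[t])[y]` sending `X 0 ↦ C X` and `X 1 ↦ X`. -/
noncomputable def e2 : MvPolynomial (Fin 2) ℤ ≃+* Polynomial (Polynomial ℤ) :=
  ((MvPolynomial.renameEquiv ℤ (Equiv.swap (0 : Fin 2) 1)).toRingEquiv.trans
    (MvPolynomial.finSuccEquiv ℤ 1).toRingEquiv).trans
    (Polynomial.mapEquiv
      ((MvPolynomial.finSuccEquiv ℤ 0).toRingEquiv.trans
        (Polynomial.mapEquiv (MvPolynomial.isEmptyRingEquiv ℤ (Fin 0)))))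

@[simp] lemma e2_X0 : e2 (MvPolynomial.X 0) = Polynomial.C Polynomial.X := by
  have h : (MvPolynomial.X (1 : Fin 2) : MvPolynomial (Fin 2) ℤ)
      = MvPolynomial.X ((0 : Fin 1).succ) := rfl
  simp [e2, Equiv.swap_apply_left, Polynomial.mapEquiv, h,
    MvPolynomial.finSuccEquiv_X_succ, MvPolynomial.finSuccEquiv_X_zero]

@[simp] lemma e2_X1 : e2 (MvPolynomial.X 1) = Polynomial.X := by
  simp [e2, Equiv.swap_apply_right, MvPolynomial.finSuccEquiv_X_zero, Polynomial.mapEquiv]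

@[simp] lemma e2_C (n : ℤ) : e2 (MvPolynomial.C n) = Polynomial.C (Polynomial.C n) := by
  simp [e2, Polynomial.mapEquiv]


variable {k : ℕ} (yv : Fin k → ℤ) (c : Fin k → ℤ)

noncomputable def Q : Polynomial ℤ := ∏ i, (Polynomial.X - Polynomial.C (yv i))

noncomputable def S : Polynomial ℤ :=
  ∑ i, Polynomial.C (c i) * ∏ j ∈ Finset.univ.erase i, (Polynomial.X - Polynomial.C (yv j))

lemma Q_monic : (Q yv).Monic :=
  monic_prod_of_monic _ _ fun i _ => monic_X_sub_C _

lemma Q_natDegree : (Q yv).natDegree = k := by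
  rw [Q, natDegree_prod _ _ fun i _ => X_sub_C_ne_zero _]
  rw [Finset.sum_congr rfl fun i _ => natDegree_X_sub_C (yv i)]
  simp

lemma S_degree_lt : (S yv c).degree < ((k + 1 : ℕ) : WithBot ℕ) := by
  rw [S]
  refine lt_of_le_of_lt (degree_sum_le _ _) ?_
  rw [Finset.sup_lt_iff (by exact_mod_cast WithBot.bot_lt_coe _)]
  intro i _
  refine lt_of_le_of_lt (degree_mul_le _ _) ?_
  have h1 : (Polynomial.C (c i)).degree ≤ 0 := degree_C_le
  have h2 : (∏ j ∈ Finset.univ.erase i, (Polynomial.X - Polynomial.C (yv j))).degree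
      ≤ ((k : ℕ) : WithBot ℕ) := by
    refine le_trans (degree_prod_le _ _) ?_
    rw [Finset.sum_congr rfl fun j _ => degree_X_sub_C (yv j)]
    rw [Finset.sum_const, nsmul_eq_mul, mul_one]
    rw [Finset.card_erase_of_mem (Finset.mem_univ i), Finset.card_univ, Fintype.card_fin]
    exact_mod_cast Nat.cast_le.mpr (Nat.sub_le k 1)
  calc (Polynomial.C (c i)).degree
        + (∏ j ∈ Finset.univ.erase i, (Polynomial.X - Polynomial.C (yv j))).degree
      ≤ 0 + ((k : ℕ) : WithBot ℕ) := add_le_add h1 h2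
    _ = ((k : ℕ) : WithBot ℕ) := by simp
    _ < ((k + 1 : ℕ) : WithBot ℕ) := by exact_mod_cast Nat.lt_succ_self k

lemma B_monic : (Polynomial.X * Q yv - S yv c).Monic := by
  have hXQ : (Polynomial.X * Q yv).Monic := monic_X.mul (Q_monic yv)
  have hdeg : (Polynomial.X * Q yv).degree = ((k + 1 : ℕ) : WithBot ℕ) := by
    rw [degree_eq_natDegree hXQ.ne_zero, monic_X.natDegree_mul (Q_monic yv),
      natDegree_X, Q_natDegree]
    congr 1
    omega
  rw [sub_eq_add_neg]
  exact hXQ.add_of_left (by rw [degree_neg, hdeg]; exact S_degree_lt yv c)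

lemma B_natDegree : (Polynomial.X * Q yv - S yv c).natDegree = k + 1 := by
  have hXQ : (Polynomial.X * Q yv).Monic := monic_X.mul (Q_monic yv)
  have h1 : (Polynomial.X * Q yv).natDegree = k + 1 := by
    rw [monic_X.natDegree_mul (Q_monic yv), natDegree_X, Q_natDegree]; omega
  have hlt : (-(S yv c)).degree < (Polynomial.X * Q yv).degree := by
    rw [degree_neg, degree_eq_natDegree hXQ.ne_zero, h1]
    exact S_degree_lt yv c
  refine natDegree_eq_of_degree_eq_some ?_
  rw [sub_eq_add_neg, degree_add_eq_left_of_degree_lt hlt,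
    degree_eq_natDegree hXQ.ne_zero, h1]

lemma S_eval (hyv : Function.Injective yv) (hc : ∀ i, 0 < c i) (i : Fin k) :
    (S yv c).eval (yv i) ≠ 0 := by
  have hval : (S yv c).eval (yv i)
      = c i * ∏ j ∈ Finset.univ.erase i, (yv i - yv j) := by
    rw [S]
    simp only [Polynomial.eval_finset_sum, Polynomial.eval_mul, Polynomial.eval_C, Polynomial.eval_prod, Polynomial.eval_sub, Polynomial.eval_X]
    rw [Finset.sum_eq_single i]
    · intro b _ hbi
      apply mul_eq_zero_of_right
      exact Finset.prod_eq_zero (Finset.mem_erase.mpr ⟨hbi.symm, Finset.mem_univ i⟩)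
        (sub_self _)
    · intro h; exact absurd (Finset.mem_univ i) h
  rw [hval]
  refine mul_ne_zero (hc i).ne' (Finset.prod_ne_zero_iff.mpr fun j hj => ?_)
  exact sub_ne_zero.mpr fun h => (Finset.mem_erase.mp hj).1 (hyv h.symm)

lemma cop (hyv : Function.Injective yv) (hc : ∀ i, 0 < c i) :
    IsCoprime ((Q yv).map (Int.castRingHom ℚ)) ((S yv c).map (Int.castRingHom ℚ)) := by
  rw [Q, Polynomial.map_prod]
  refine IsCoprime.prod_left fun i _ => ?_
  simp only [Polynomial.map_sub, Polynomial.map_X, Polynomial.map_C]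
  rw [(Polynomial.irreducible_X_sub_C ((Int.castRingHom ℚ) (yv i))).coprime_iff_not_dvd,
    Polynomial.dvd_iff_isRoot]
  intro h
  rw [IsRoot, Polynomial.eval_map, Polynomial.eval₂_at_apply] at h
  exact S_eval yv c hyv hc i ((map_eq_zero_iff (Int.castRingHom ℚ) Int.cast_injective).mp h)

lemma prim (hyv : Function.Injective yv) (hc : ∀ i, 0 < c i) :
    (Polynomial.C (-(Q yv)) * Polynomial.X ^ 2
      + Polynomial.C (Polynomial.X * Q yv - S yv c)).IsPrimitive := by
  intro r hr
  rw [Polynomial.C_dvd_iff_dvd_coeff] at hr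
  have hc2 : (Polynomial.C (-(Q yv)) * Polynomial.X ^ 2
      + Polynomial.C (Polynomial.X * Q yv - S yv c)).coeff 2 = -(Q yv) := by
    rw [Polynomial.coeff_add, Polynomial.coeff_C_mul, Polynomial.coeff_X_pow, Polynomial.coeff_C]
    norm_num
  have hc0 : (Polynomial.C (-(Q yv)) * Polynomial.X ^ 2
      + Polynomial.C (Polynomial.X * Q yv - S yv c)).coeff 0 = Polynomial.X * Q yv - S yv c := by
    rw [Polynomial.coeff_add, Polynomial.coeff_C_mul, Polynomial.coeff_X_pow, Polynomial.coeff_C]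
    norm_num
  have h2 : r ∣ -(Q yv) := hc2 ▸ hr 2
  have h0 : r ∣ Polynomial.X * Q yv - S yv c := hc0 ▸ hr 0
  have hrQ : r ∣ Q yv := (dvd_neg).mp h2
  have hrS : r ∣ S yv c := by
    have hx : r ∣ Polynomial.X * Q yv := hrQ.mul_left _
    have := dvd_sub hx h0
    simpa using this
  have hu : IsUnit (r.map (Int.castRingHom ℚ)) :=
    (cop yv c hyv hc).isUnit_of_dvd' (Polynomial.map_dvd _ hrQ) (Polynomial.map_dvd _ hrS)
  have hdeg : r.natDegree = 0 := by
    rw [← natDegree_map_eq_of_injective (f := Int.castRingHom ℚ) Int.cast_injective r]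
    exact natDegree_eq_zero_of_isUnit hu
  obtain ⟨n, rfl⟩ := natDegree_eq_zero.mp hdeg
  exact isUnit_C.mpr ((Q_monic yv).isPrimitive n hrQ)

lemma key (hyv : Function.Injective yv) (hc : ∀ i, 0 < c i) :
    Irreducible (Polynomial.C (-(Q yv)) * Polynomial.X ^ 2
      + Polynomial.C (Polynomial.X * Q yv - S yv c)) := by
  set K := FractionRing (Polynomial ℤ)
  set ψ := algebraMap (Polynomial ℤ) K with hψ
  have hinj : Function.Injective ψ := IsFractionRing.injective (Polynomial ℤ) K
  set p : Polynomial (Polynomial ℤ) := Polynomial.C (-(Q yv)) * Polynomial.X ^ 2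
      + Polynomial.C (Polynomial.X * Q yv - S yv c) with hp
  rw [(prim yv c hyv hc).irreducible_iff_irreducible_map_fraction_map (K := K), ← hψ, ← hp]
  have hmap : p.map ψ = Polynomial.C (ψ (-(Q yv))) * Polynomial.X ^ 2
      + Polynomial.C 0 * Polynomial.X + Polynomial.C (ψ (Polynomial.X * Q yv - S yv c)) := by
    simp [hp, Polynomial.map_add, Polynomial.map_mul, Polynomial.map_pow,
      Polynomial.map_C, Polynomial.map_X]
  have hA : ψ (-(Q yv)) ≠ 0 := by
    intro h
    have := (map_eq_zero_iff ψ hinj).mp h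
    rw [neg_eq_zero] at this
    exact (Q_monic yv).ne_zero this
  have hdeg : (p.map ψ).natDegree = 2 := by
    rw [hmap]; exact natDegree_quadratic hA
  rw [irreducible_iff_roots_eq_zero_of_degree_le_three (by omega) (by omega),
    Multiset.eq_zero_iff_forall_notMem]
  intro r hr
  have hne : p.map ψ ≠ 0 := fun h => by simp [h] at hdeg
  rw [mem_roots hne] at hr
  have hev : ψ (-(Q yv)) * r ^ 2 + ψ (Polynomial.X * Q yv - S yv c) = 0 := by
    rw [IsRoot, hmap] at hr
    simpa using hr
  rw [map_neg] at hev
  set D := Q yv * (Polynomial.X * Q yv - S yv c) with hD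
  have key2 : (ψ (Q yv) * r) ^ 2 = ψ D := by
    rw [hD, map_mul]
    linear_combination (-(ψ (Q yv))) * hev
  have hint : IsIntegral (Polynomial ℤ) (ψ (Q yv) * r) := by
    refine ⟨Polynomial.X ^ 2 - Polynomial.C D, monic_X_pow_sub_C _ (by norm_num), ?_⟩
    rw [Polynomial.eval₂_sub, Polynomial.eval₂_pow, Polynomial.eval₂_X, Polynomial.eval₂_C,
      key2, sub_self]
  obtain ⟨h, hh⟩ := IsIntegrallyClosed.isIntegral_iff.mp hint
  have hhD : h ^ 2 = D := hinj (by rw [map_pow, hh, key2])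
  have h2 : (h ^ 2).natDegree = 2 * k + 1 := by
    rw [hhD, hD, (Q_monic yv).natDegree_mul (B_monic yv c), Q_natDegree, B_natDegree]
    ring
  rw [natDegree_pow] at h2
  omega

end TraceIrredAux


open TraceIrredAux Polynomial in
/-- For `k ≥ 1`, pairwise distinct integers `y₁, …, y_k` and positive integers
`c₁, …, c_k`, the polynomial
`p(t, y) = -y² ∏ᵢ (t - yᵢ) + t ∏ᵢ (t - yᵢ) - ∑ᵢ cᵢ ∏_{j ≠ i} (t - yⱼ)`
is irreducible in `ℤ[t, y]` (here `t = X 0` and `y = X 1`). -/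
theorem irreducible_trace_field_polynomial
    (k : ℕ) (hk : 1 ≤ k)
    (yv : Fin k → ℤ) (hyv : Function.Injective yv)
    (c : Fin k → ℤ) (hc : ∀ i, 0 < c i) :
    Irreducible
      (-(MvPolynomial.X 1) ^ 2
          * ∏ i, (MvPolynomial.X 0 - MvPolynomial.C (yv i))
        + MvPolynomial.X 0 * ∏ i, (MvPolynomial.X 0 - MvPolynomial.C (yv i))
        - ∑ i, MvPolynomial.C (c i)
            * ∏ j ∈ Finset.univ.erase i, (MvPolynomial.X 0 - MvPolynomial.C (yv j))
        : MvPolynomial (Fin 2) ℤ) := by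
  refine (MulEquiv.irreducible_iff (TraceIrredAux.e2)).mp ?_
  have heq : TraceIrredAux.e2
      (-(MvPolynomial.X 1) ^ 2
          * ∏ i, (MvPolynomial.X 0 - MvPolynomial.C (yv i))
        + MvPolynomial.X 0 * ∏ i, (MvPolynomial.X 0 - MvPolynomial.C (yv i))
        - ∑ i, MvPolynomial.C (c i)
            * ∏ j ∈ Finset.univ.erase i, (MvPolynomial.X 0 - MvPolynomial.C (yv j)))
      = Polynomial.C (-(Q yv)) * Polynomial.X ^ 2
        + Polynomial.C (Polynomial.X * Q yv - S yv c) := by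
    have hCQ : Polynomial.C (Q yv)
        = ∏ i, (Polynomial.C Polynomial.X - Polynomial.C (Polynomial.C (yv i))) := by
      rw [Q, map_prod]
      simp only [map_sub]
    have hCS : Polynomial.C (S yv c)
        = ∑ i, Polynomial.C (Polynomial.C (c i))
            * ∏ j ∈ Finset.univ.erase i,
              (Polynomial.C Polynomial.X - Polynomial.C (Polynomial.C (yv j))) := by
      rw [S, map_sum]
      simp only [map_mul, map_prod, map_sub]
    simp only [map_add, map_sub, map_mul, map_neg, map_pow, map_prod, map_sum,
      e2_X0, e2_X1, e2_C]
    rw [hCQ, hCS]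
    ring
  rw [heq]
  exact key yv c hyv hc
end

section
/- Let g > 3 be an integer, and let A be the (g+1)×(g+1) integer matrix with rows and columns indexed by 0, 1, …, g whose entries are: A₀₀ = g+2; A₀₁ = A₁₀ = A₀₂ = A₂₀ = 2; A₀ⱼ = Aⱼ₀ = 1 for 3 ≤ j ≤ g; Aⱼⱼ = 1 for 1 ≤ j ≤ g; A₁₂ = A₂₁ = 1; and all other entries equal to 0. Then the characteristic polynomial of A equals t²·(t − 1)^{g−3}·(t² − (g+5)·t + (2g+2)). -/
/-!
The rows and columns of `A - 1` with indices `3, …, g` coincide, so `A - 1 = N.submatrix π π`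
for a `4 × 4` matrix `N` and `π i = min i 3`. Writing this as `P N Pᵀ`, Sylvester's identity
`t ^ 4 χ(P (N Pᵀ)) = t ^ (g + 1) χ(N Pᵀ P)` reduces the problem to the `4 × 4` matrix
`N Pᵀ P = N · diag(1, 1, 1, g - 2)`, whose characteristic polynomial is
`(t + 1)² (t² - (g + 3) t + g - 2)`; adding back the identity substitutes `t - 1` for `t`.
-/

open Polynomial Matrix Finset

namespace Matrix

variable {R : Type*} [CommRing R] {m n : Type*} [DecidableEq m]

theorem transpose_mul_self_submatrix_one [Fintype n] (π : n → m) :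
    ((1 : Matrix m m R).submatrix π id)ᵀ * (1 : Matrix m m R).submatrix π id
      = diagonal fun l => (#{i | π i = l} : R) := by
  ext l l'
  simp only [mul_apply, transpose_apply, submatrix_apply, id, one_apply, diagonal_apply]
  rcases eq_or_ne l l' with rfl | hne
  · simp +contextual [Finset.sum_boole, eq_comm]
  · simp +contextual [hne, hne.symm]

variable [Fintype m]

theorem charpoly_add_scalar (M : Matrix m m R) (μ : R) :
    (M + scalar m μ).charpoly = M.charpoly.comp (X - C μ) := by
  rw [← add_sub_cancel_right M (scalar m μ), charpoly_sub_scalar, add_sub_cancel_right,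
    comp_assoc]
  simp

theorem submatrix_eq_mul_mul_transpose (N : Matrix m m R) (π : n → m) :
    N.submatrix π π
      = (1 : Matrix m m R).submatrix π id * N * ((1 : Matrix m m R).submatrix π id)ᵀ := by
  ext i j
  simp [mul_apply, one_apply]

theorem charpoly_submatrix_self [Fintype n] [DecidableEq n] (N : Matrix m m R) (π : n → m)
    (h : Fintype.card m ≤ Fintype.card n) :
    (N.submatrix π π).charpoly = X ^ (Fintype.card n - Fintype.card m)
      * (N * diagonal fun l => (#{i | π i = l} : R)).charpoly := by
  rw [submatrix_eq_mul_mul_transpose, Matrix.mul_assoc, charpoly_mul_comm_of_le _ _ h,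
    Matrix.mul_assoc, transpose_mul_self_submatrix_one]

end Matrix

theorem Fin.clamp_three_cases (a : ℕ) :
    (a = 0 ∧ Fin.clamp a 3 = 0) ∨ (a = 1 ∧ Fin.clamp a 3 = 1) ∨ (a = 2 ∧ Fin.clamp a 3 = 2)
      ∨ (3 ≤ a ∧ Fin.clamp a 3 = 3) := by
  simp [Fin.ext_iff, Fin.clamp]
  omega

theorem Fin.card_clamp_three_fiber (g : ℕ) (hg : 3 ≤ g) :
    (fun l : Fin 4 => (#{i : Fin (g + 1) | Fin.clamp i 3 = l} : ℤ))
      = ![1, 1, 1, (g : ℤ) - 2] := by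
  have hsmall : ∀ l : Fin 4, (l : ℕ) < 3 →
      ({i : Fin (g + 1) | Fin.clamp i 3 = l} : Finset _) = {⟨l, by omega⟩} := by
    intro l hl
    ext i
    simp only [mem_filter, mem_univ, true_and, mem_singleton, Fin.ext_iff, Fin.clamp]
    omega
  have hlast : ({i : Fin (g + 1) | Fin.clamp i 3 = 3} : Finset _) = Ici ⟨3, by omega⟩ := by
    ext i
    simp [Fin.ext_iff, Fin.le_def, Fin.clamp]
  funext l
  fin_cases l
  · simp [hsmall 0 (by decide)]
  · simp [hsmall 1 (by decide)]
  · simp [hsmall 2 (by decide)]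
  · change (#{i : Fin (g + 1) | Fin.clamp i 3 = 3} : ℤ) = (g : ℤ) - 2
    rw [hlast, Fin.card_Ici, Fin.val_mk]
    omega

theorem charpoly_fin_four_spin {R : Type*} [CommRing R] (c : R) :
    (!![c + 1, 2, 2, c - 2; 2, 0, 1, 0; 2, 1, 0, 0; 1, 0, 0, 0] :
      Matrix (Fin 4) (Fin 4) R).charpoly = (X + 1) ^ 2 * (X ^ 2 - C (c + 3) * X + C (c - 2)) := by
  rw [charpoly, det_succ_row_zero]
  simp [Fin.sum_univ_succ, det_fin_three, charmatrix_apply, Fin.succAbove, map_ofNat]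
  ring

def evenSpinMatrix (g : ℕ) : Matrix (Fin (g + 1)) (Fin (g + 1)) ℤ :=
  Matrix.of fun i j =>
    if (i : ℕ) = 0 ∧ (j : ℕ) = 0 then (g : ℤ) + 2
    else if ((i : ℕ) = 0 ∧ ((j : ℕ) = 1 ∨ (j : ℕ) = 2))
        ∨ ((j : ℕ) = 0 ∧ ((i : ℕ) = 1 ∨ (i : ℕ) = 2)) then 2
    else if (i : ℕ) = 0 ∨ (j : ℕ) = 0 then 1
    else if (i : ℕ) = (j : ℕ) then 1
    else if ((i : ℕ) = 1 ∧ (j : ℕ) = 2) ∨ ((i : ℕ) = 2 ∧ (j : ℕ) = 1) then 1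
    else 0

def evenSpinCore (g : ℕ) : Matrix (Fin 4) (Fin 4) ℤ :=
  !![(g : ℤ) + 1, 2, 2, 1; 2, 0, 1, 0; 2, 1, 0, 0; 1, 0, 0, 0]

theorem evenSpinMatrix_sub_one (g : ℕ) :
    evenSpinMatrix g - 1 = (evenSpinCore g).submatrix
      (fun i : Fin (g + 1) => Fin.clamp i 3) (fun i : Fin (g + 1) => Fin.clamp i 3) := by
  ext i j
  simp only [evenSpinMatrix, evenSpinCore, Matrix.sub_apply, of_apply, one_apply,
    submatrix_apply, Fin.ext_iff]
  rcases Fin.clamp_three_cases i with ⟨hi, hπi⟩ | ⟨hi, hπi⟩ | ⟨hi, hπi⟩ | ⟨hi, hπi⟩ <;>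
    rcases Fin.clamp_three_cases j with ⟨hj, hπj⟩ | ⟨hj, hπj⟩ | ⟨hj, hπj⟩ | ⟨hj, hπj⟩ <;>
    simp only [hπi, hπj] <;> simp [hi, hj, -Fin.val_eq_zero_iff] <;> (try split_ifs) <;> omega

theorem evenSpinCore_mul_diagonal_card_fiber (g : ℕ) (hg : 3 ≤ g) :
    evenSpinCore g * diagonal (fun l => (#{i : Fin (g + 1) | Fin.clamp i 3 = l} : ℤ))
      = !![(g : ℤ) + 1, 2, 2, (g : ℤ) - 2; 2, 0, 1, 0; 2, 1, 0, 0; 1, 0, 0, 0] := by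
  rw [Fin.card_clamp_three_fiber g hg, evenSpinCore]
  ext k l
  fin_cases k <;> fin_cases l <;> simp

/-- For `g > 3`, the characteristic polynomial of the `(g+1) × (g+1)` integer matrix with
`A₀₀ = g + 2`, `A₀₁ = A₁₀ = A₀₂ = A₂₀ = 2`, `A₀ⱼ = Aⱼ₀ = 1` for `3 ≤ j ≤ g`, `Aⱼⱼ = 1` for
`1 ≤ j ≤ g`, `A₁₂ = A₂₁ = 1`, and all other entries `0`, equals
`t² (t-1)^(g-3) (t² - (g+5) t + (2g+2))`. -/
theorem charpoly_non_hyperelliptic_even_spin_matrix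
    (g : ℕ) (hg : 3 < g)
    (A : Matrix (Fin (g + 1)) (Fin (g + 1)) ℤ)
    (hA : ∀ i j : Fin (g + 1), A i j =
      if (i : ℕ) = 0 ∧ (j : ℕ) = 0 then (g : ℤ) + 2
      else if ((i : ℕ) = 0 ∧ ((j : ℕ) = 1 ∨ (j : ℕ) = 2))
          ∨ ((j : ℕ) = 0 ∧ ((i : ℕ) = 1 ∨ (i : ℕ) = 2)) then 2
      else if (i : ℕ) = 0 ∨ (j : ℕ) = 0 then 1
      else if (i : ℕ) = (j : ℕ) then 1
      else if ((i : ℕ) = 1 ∧ (j : ℕ) = 2) ∨ ((i : ℕ) = 2 ∧ (j : ℕ) = 1) then 1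
      else 0) :
    A.charpoly
      = Polynomial.X ^ 2 * (Polynomial.X - 1) ^ (g - 3)
        * (Polynomial.X ^ 2 - Polynomial.C ((g : ℤ) + 5) * Polynomial.X
            + Polynomial.C (2 * (g : ℤ) + 2)) := by
  have hA_shift : A = (evenSpinMatrix g - 1) + scalar _ 1 := by
    rw [map_one, sub_add_cancel]
    ext i j
    exact hA i j
  rw [hA_shift, charpoly_add_scalar, evenSpinMatrix_sub_one,
    charpoly_submatrix_self _ _ (by simp; omega), evenSpinCore_mul_diagonal_card_fiber g hg.le,
    charpoly_fin_four_spin]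
  simp only [Fintype.card_fin, show g + 1 - 4 = g - 3 by omega, mul_comp, pow_comp, add_comp,
    sub_comp, X_comp, one_comp, natCast_comp, ofNat_comp, map_one, map_add, map_sub, map_mul,
    map_natCast, map_ofNat]
  ring
end

section
/- Let k ≥ 1 and let y₁, …, y_k be pairwise distinct positive integers. Then the polynomial −y²·(t² − 3t + 1)·∏_{i=1}^{k}(t − yᵢ) + (t³ − 3t² + 1)·∏_{i=1}^{k}(t − yᵢ) − (t² − 3t + 1)·Σ_{i=1}^{k} yᵢ·∏_{j≠i}(t − y_j) is irreducible in ℤ[t, y]. -/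
open Polynomial in
private lemma int_quad_ne (n : ℤ) : n^2 - 3*n + 1 ≠ 0 := by
  intro h
  have h1 : (n-1)*(n-2) = 1 := by nlinarith [h]
  rcases Int.mul_eq_one_iff_eq_one_or_neg_one.mp h1 with ⟨h2,h3⟩|⟨h2,h3⟩ <;> omega

open Polynomial in
private lemma irredA : Irreducible ((X:ℤ[X])^2 - 3*X + 1) := by
  have hm : ((X:ℤ[X])^2 - 3*X + 1).Monic := by monicity!
  have hd : ((X:ℤ[X])^2 - 3*X + 1).natDegree = 2 := by compute_degree!
  by_contra h
  obtain ⟨c₁, c₂, h0, h1⟩ := (hm.not_irreducible_iff_exists_add_mul_eq_coeff hd).mp h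
  simp [coeff_one] at h0 h1
  rcases Int.mul_eq_one_iff_eq_one_or_neg_one.mp h0.symm with ⟨h2,h3⟩|⟨h2,h3⟩ <;> omega

open Polynomial in
private lemma irred_quad (c d : ℤ[X]) (hc : c ≠ 0)
    (h0 : ∀ r : ℤ[X], r ∣ c → r ∣ d → IsUnit r)
    (h1 : ∀ a a' b b' : ℤ[X], a * a' = c → a * b' + a' * b = 0 → b * b' = d → False) :
    Irreducible (Polynomial.C c * Polynomial.X ^ 2 + Polynomial.C d) := by
  set P : Polynomial ℤ[X] := Polynomial.C c * Polynomial.X ^ 2 + Polynomial.C d with hP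
  have hPdeg : P.natDegree = 2 := by
    rw [hP]; compute_degree!
  have hPne : P ≠ 0 := fun h => by simp [h] at hPdeg
  have hc2 : P.coeff 2 = c := by simp [hP, coeff_C]
  have hc0 : P.coeff 0 = d := by simp [hP, coeff_C]
  have hc1 : P.coeff 1 = 0 := by simp [hP, coeff_C]
  constructor
  · intro h
    have := natDegree_eq_zero_of_isUnit h
    omega
  · intro f g hfg
    have hf0 : f ≠ 0 := fun h => hPne (by simp [hfg, h])
    have hg0 : g ≠ 0 := fun h => hPne (by simp [hfg, h])
    have hdeg : f.natDegree + g.natDegree = 2 := by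
      rw [← natDegree_mul hf0 hg0, ← hfg, hPdeg]
    rcases Nat.lt_or_ge f.natDegree 1 with hf1 | hf1
    · left
      have hf : f = Polynomial.C (f.coeff 0) := eq_C_of_natDegree_eq_zero (by omega)
      have hdc : f.coeff 0 ∣ c := by
        refine ⟨g.coeff 2, ?_⟩
        rw [← hc2, hfg, hf, coeff_C_mul]; simp
      have hdd : f.coeff 0 ∣ d := by
        refine ⟨g.coeff 0, ?_⟩
        rw [← hc0, hfg, hf, coeff_C_mul]; simp
      rw [hf, isUnit_C]
      exact h0 _ hdc hdd
    rcases Nat.lt_or_ge g.natDegree 1 with hg1 | hg1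
    · right
      have hg : g = Polynomial.C (g.coeff 0) := eq_C_of_natDegree_eq_zero (by omega)
      have hdc : g.coeff 0 ∣ c := by
        refine ⟨f.coeff 2, ?_⟩
        rw [← hc2, hfg, hg, mul_comm, coeff_C_mul]; simp
      have hdd : g.coeff 0 ∣ d := by
        refine ⟨f.coeff 0, ?_⟩
        rw [← hc0, hfg, hg, mul_comm, coeff_C_mul]; simp
      rw [hg, isUnit_C]
      exact h0 _ hdc hdd
    · exfalso
      have hfd : f.natDegree = 1 := by omega
      have hgd : g.natDegree = 1 := by omega
      have hfe := eq_X_add_C_of_natDegree_le_one (le_of_eq hfd)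
      have hge := eq_X_add_C_of_natDegree_le_one (le_of_eq hgd)
      set a := f.coeff 1; set b := f.coeff 0
      set a' := g.coeff 1; set b' := g.coeff 0
      have hexp : P = Polynomial.C (a*a') * Polynomial.X^2
          + Polynomial.C (a*b'+a'*b) * Polynomial.X + Polynomial.C (b*b') := by
        rw [hfg, hfe, hge]; simp only [map_mul, map_add]; ring
      apply h1 a a' b b'
      · have := congrArg (fun p => Polynomial.coeff p 2) hexp
        simp only [hc2, coeff_add, coeff_C_mul, coeff_X_pow, coeff_C, coeff_X] at this
        simpa using this.symm
      · have := congrArg (fun p => Polynomial.coeff p 1) hexp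
        simp only [hc1, coeff_add, coeff_C_mul, coeff_X_pow, coeff_C, coeff_X] at this
        simpa using this.symm
      · have := congrArg (fun p => Polynomial.coeff p 0) hexp
        simp only [hc0, coeff_add, coeff_C_mul, coeff_X_pow, coeff_C, coeff_X] at this
        simpa using this.symm

open MvPolynomial

noncomputable def e2 : MvPolynomial (Fin 2) ℤ ≃ₐ[ℤ] Polynomial (Polynomial ℤ) :=
  (MvPolynomial.renameEquiv ℤ (Equiv.swap (0 : Fin 2) 1)).trans
    ((MvPolynomial.finSuccEquiv ℤ 1).trans
      (Polynomial.mapAlgEquiv ((MvPolynomial.finSuccEquiv ℤ 0).trans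
        (Polynomial.mapAlgEquiv (MvPolynomial.isEmptyAlgEquiv ℤ (Fin 0))))))

lemma e2_X0 : e2 (X 0) = Polynomial.C Polynomial.X := by
  have h1 : (Equiv.swap (0 : Fin 2) 1) 0 = 1 := by decide
  have h2 : (X (1 : Fin 2) : MvPolynomial (Fin 2) ℤ) = X (Fin.succ 0) := rfl
  rw [e2]
  simp only [AlgEquiv.trans_apply, renameEquiv_apply, rename_X, h1, h2, finSuccEquiv_X_succ]
  simp [Polynomial.mapAlgEquiv, finSuccEquiv_X_zero]

lemma e2_X1 : e2 (X 1) = Polynomial.X := by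
  have h1 : (Equiv.swap (0 : Fin 2) 1) 1 = 0 := by decide
  rw [e2]
  simp only [AlgEquiv.trans_apply, renameEquiv_apply, rename_X, h1, finSuccEquiv_X_zero]
  simp [Polynomial.mapAlgEquiv]

lemma e2_C (z : ℤ) : e2 (C z) = Polynomial.C (Polynomial.C z) := by
  have h := e2.commutes z
  simp only [algebraMap_eq] at h
  rw [h]
  simp [algebraMap_int_eq, Polynomial.C_eq_intCast]

/-- For `k ≥ 1` and pairwise distinct positive integers `y₁, …, y_k`, the polynomial
`-y² (t² - 3t + 1) ∏ᵢ (t - yᵢ) + (t³ - 3t² + 1) ∏ᵢ (t - yᵢ)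
  - (t² - 3t + 1) ∑ᵢ yᵢ ∏_{j ≠ i} (t - yⱼ)`
is irreducible in `ℤ[t, y]` (here `t = X 0` and `y = X 1`). -/
theorem irreducible_odd_spin_polynomial
    (k : ℕ) (hk : 1 ≤ k)
    (yv : Fin k → ℤ) (hpos : ∀ i, 0 < yv i) (hyv : Function.Injective yv) :
    Irreducible
      (-(MvPolynomial.X 1) ^ 2
            * ((MvPolynomial.X 0) ^ 2 - 3 * MvPolynomial.X 0 + 1)
            * ∏ i, (MvPolynomial.X 0 - MvPolynomial.C (yv i))
        + ((MvPolynomial.X 0) ^ 3 - 3 * (MvPolynomial.X 0) ^ 2 + 1)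
            * ∏ i, (MvPolynomial.X 0 - MvPolynomial.C (yv i))
        - ((MvPolynomial.X 0) ^ 2 - 3 * MvPolynomial.X 0 + 1)
            * ∑ i, MvPolynomial.C (yv i)
                * ∏ j ∈ Finset.univ.erase i, (MvPolynomial.X 0 - MvPolynomial.C (yv j))
        : MvPolynomial (Fin 2) ℤ) := by
  set A : Polynomial ℤ := Polynomial.X^2 - 3*Polynomial.X + 1 with hA
  set B : Polynomial ℤ := Polynomial.X^3 - 3*Polynomial.X^2 + 1 with hB
  set Q : Polynomial ℤ := ∏ i, (Polynomial.X - Polynomial.C (yv i)) with hQ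
  set S : Polynomial ℤ :=
    ∑ i, Polynomial.C (yv i) * ∏ j ∈ Finset.univ.erase i, (Polynomial.X - Polynomial.C (yv j))
    with hS
  -- basic facts in ℤ[X]
  have hAdeg : A.natDegree = 2 := by rw [hA]; compute_degree!
  have hA0 : A ≠ 0 := fun h => by simp [h] at hAdeg
  have hAprime : Prime A := (UniqueFactorizationMonoid.irreducible_iff_prime).mp irredA
  have hQ0 : Q ≠ 0 := by
    rw [hQ]
    exact Finset.prod_ne_zero_iff.mpr fun i _ => Polynomial.X_sub_C_ne_zero _
  have hAQ : ¬ A ∣ Q := by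
    intro h
    rw [hQ] at h
    obtain ⟨i, -, hi⟩ := (hAprime.dvd_finset_prod_iff _).mp h
    have := Polynomial.eq_zero_of_dvd_of_natDegree_lt hi
      (by rw [Polynomial.natDegree_X_sub_C, hAdeg]; omega)
    exact Polynomial.X_sub_C_ne_zero _ this
  have hAB : ¬ A ∣ B := by
    intro h
    have h2 : A ∣ (1 - Polynomial.X : Polynomial ℤ) := by
      have e : (1 - Polynomial.X : Polynomial ℤ) = B - Polynomial.X * A := by
        rw [hA, hB]; ring
      rw [e]
      exact dvd_sub h (Dvd.intro_left _ rfl)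
    have h3 : (1 - Polynomial.X : Polynomial ℤ) = 0 :=
      Polynomial.eq_zero_of_dvd_of_natDegree_lt h2 (by
        have : (1 - Polynomial.X : Polynomial ℤ).natDegree = 1 := by compute_degree!
        omega)
    have := congrArg (Polynomial.eval 0) h3
    simp at this
  set c : Polynomial ℤ := -(A*Q) with hc
  set d : Polynomial ℤ := B*Q - A*S with hd
  have hAd : ¬ A ∣ d := by
    intro h
    have h2 : A ∣ B*Q := by
      have e : B*Q = d + A*S := by rw [hd]; ring
      rw [e]
      exact dvd_add h (Dvd.intro _ rfl)
    rcases hAprime.2.2 _ _ h2 with h3 | h3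
    · exact hAB h3
    · exact hAQ h3
  have hdroot : ∀ i, ¬ (Polynomial.X - Polynomial.C (yv i)) ∣ d := by
    intro i h
    have hroot : d.eval (yv i) = 0 := Polynomial.dvd_iff_isRoot.mp h
    have hQe : Q.eval (yv i) = 0 := by
      rw [hQ, Polynomial.eval_prod]
      exact Finset.prod_eq_zero (Finset.mem_univ i) (by simp)
    have hSe : S.eval (yv i)
        = yv i * ∏ j ∈ Finset.univ.erase i, (yv i - yv j) := by
      rw [hS, Polynomial.eval_finset_sum]
      rw [Finset.sum_eq_single i]
      · simp [Polynomial.eval_prod]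
      · intro j _ hj
        have hij : i ∈ Finset.univ.erase j := Finset.mem_erase.mpr ⟨fun h => hj h.symm, Finset.mem_univ _⟩
        simp only [Polynomial.eval_mul, Polynomial.eval_C, Polynomial.eval_prod]
        rw [Finset.prod_eq_zero hij (by simp)]
        ring
      · intro h; exact absurd (Finset.mem_univ i) h
    have hSe0 : S.eval (yv i) ≠ 0 := by
      rw [hSe]
      refine mul_ne_zero (by have := hpos i; omega) ?_
      refine Finset.prod_ne_zero_iff.mpr fun j hj => ?_
      have : yv i ≠ yv j := fun h => (Finset.mem_erase.mp hj).1 (hyv h.symm)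
      exact sub_ne_zero.mpr this
    have hAe : A.eval (yv i) ≠ 0 := by
      rw [hA]
      simpa using int_quad_ne (yv i)
    rw [hd] at hroot
    simp only [Polynomial.eval_sub, Polynomial.eval_mul, hQe, mul_zero, zero_sub, neg_eq_zero] at hroot
    exact (mul_ne_zero hAe hSe0) hroot
  have hc0 : c ≠ 0 := by
    rw [hc]
    exact neg_ne_zero.mpr (mul_ne_zero hA0 hQ0)
  -- coprime-type condition
  have h0 : ∀ r : Polynomial ℤ, r ∣ c → r ∣ d → IsUnit r := by
    intro r hrc hrd
    by_contra hr
    have hr0 : r ≠ 0 := fun h => hc0 (by simpa [h] using hrc)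
    obtain ⟨p, hpirr, hpr⟩ := WfDvdMonoid.exists_irreducible_factor hr hr0
    have hp : Prime p := (UniqueFactorizationMonoid.irreducible_iff_prime).mp hpirr
    have hpc : p ∣ A*Q := by
      have h' := hpr.trans hrc
      rw [hc] at h'
      exact dvd_neg.mp h'
    rcases hp.2.2 _ _ hpc with h1 | h1
    · have hassoc : Associated p A := hpirr.associated_of_dvd irredA h1
      exact hAd (hassoc.symm.dvd.trans (hpr.trans hrd))
    · rw [hQ] at h1
      obtain ⟨i, -, hi⟩ := (hp.dvd_finset_prod_iff _).mp h1
      have hassoc : Associated p (Polynomial.X - Polynomial.C (yv i)) :=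
        hpirr.associated_of_dvd (Polynomial.irreducible_X_sub_C _) hi
      exact hdroot i (hassoc.symm.dvd.trans (hpr.trans hrd))
  -- no linear×linear factorization
  have key : ∀ u u' v v' : Polynomial ℤ,
      u*u' = c → u*v' + u'*v = 0 → v*v' = d → A ∣ u → False := by
    intro u u' v v' huu hmid hvv hAu
    have h2 : A ∣ u'*v := by
      have e : u'*v = -(u*v') := by linear_combination hmid
      rw [e]
      exact dvd_neg.mpr (hAu.mul_right _)
    rcases hAprime.2.2 _ _ h2 with h3 | h3
    · have h4 : A*A ∣ A*Q := by
        have e : A*Q = -(u*u') := by rw [huu, hc]; ring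
        rw [e]
        exact dvd_neg.mpr (mul_dvd_mul hAu h3)
      exact hAQ ((mul_dvd_mul_iff_left hA0).mp h4)
    · exact hAd (hvv ▸ h3.mul_right v')
  have h1 : ∀ a a' b b' : Polynomial ℤ,
      a * a' = c → a * b' + a' * b = 0 → b * b' = d → False := by
    intro a a' b b' haa hmid hbb
    have hAc : A ∣ a*a' := by
      rw [haa, hc]
      exact dvd_neg.mpr (Dvd.intro _ rfl)
    rcases hAprime.2.2 _ _ hAc with h | h
    · exact key a a' b b' haa hmid hbb h
    · exact key a' a b' b (by rw [← haa]; ring) (by linear_combination hmid) (by rw [← hbb]; ring) h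
  have hirr := irred_quad c d hc0 h0 h1
  rw [← MulEquiv.irreducible_iff e2]
  have hmap : e2
      (-(MvPolynomial.X 1) ^ 2
            * ((MvPolynomial.X 0) ^ 2 - 3 * MvPolynomial.X 0 + 1)
            * ∏ i, (MvPolynomial.X 0 - MvPolynomial.C (yv i))
        + ((MvPolynomial.X 0) ^ 3 - 3 * (MvPolynomial.X 0) ^ 2 + 1)
            * ∏ i, (MvPolynomial.X 0 - MvPolynomial.C (yv i))
        - ((MvPolynomial.X 0) ^ 2 - 3 * MvPolynomial.X 0 + 1)
            * ∑ i, MvPolynomial.C (yv i)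
                * ∏ j ∈ Finset.univ.erase i, (MvPolynomial.X 0 - MvPolynomial.C (yv j))
        : MvPolynomial (Fin 2) ℤ) = Polynomial.C c * Polynomial.X ^ 2 + Polynomial.C d := by
    simp only [hc, hd, hA, hB, hQ, hS, map_add, map_sub, map_mul, map_neg, map_pow, map_prod,
      map_sum, map_ofNat, map_one, e2_X0, e2_X1, e2_C]
    ring
  rw [hmap]
  exact hirr
end

section
/- Let k ≥ 1, let α be an element of a commutative ring R, and let y be a variable. Let J_k(α, y) be the (k+2)×(k+2) tridiagonal matrix over R[y] with diagonal entries (α, 2, 2, …, 2, y²), sub- and super-diagonal entries (1, 1, …, 1, y), and all other entries 0. Then its characteristic polynomial p_k(t, y) satisfies p_k(t, y) = −y²·(q_k(t) + q_{k−1}(t)) + t·q_k(t), where q_j(t) is the characteristic polynomial of B_j(α). -/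
open Polynomial Matrix

/-- Let `J` be the `(k+2) × (k+2)` tridiagonal matrix over `R[y]` with diagonal
`(α, 2, …, 2, y²)` and sub/super-diagonal entries `(1, …, 1, y)`, and let `B_j` be the
`(j+1) × (j+1)` tridiagonal matrix over `R` with diagonal `(α, 2, …, 2)` and
sub/super-diagonal entries `1`.  Then the characteristic polynomial of `J` satisfies
`p_k(t, y) = -y² (q_k(t) + q_{k-1}(t)) + t q_k(t)`, where `q_j` is the characteristic
polynomial of `B_j`. -/
theorem charpoly_jacobi_matrix_recursion
    (R : Type*) [CommRing R] (k : ℕ) (hk : 1 ≤ k) (α : R)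
    (J : Matrix (Fin (k + 2)) (Fin (k + 2)) (Polynomial R))
    (hJ : ∀ p q : Fin (k + 2), J p q =
      if p = q then
        (if (p : ℕ) = 0 then Polynomial.C α
         else if (p : ℕ) = k + 1 then Polynomial.X ^ 2 else 2)
      else if (p : ℕ) + 1 = (q : ℕ) ∨ (q : ℕ) + 1 = (p : ℕ) then
        (if (p : ℕ) = k + 1 ∨ (q : ℕ) = k + 1 then Polynomial.X else 1)
      else 0)
    (Bk : Matrix (Fin (k + 1)) (Fin (k + 1)) R)
    (hBk : ∀ p q : Fin (k + 1), Bk p q =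
      if p = q then (if (p : ℕ) = 0 then α else 2)
      else if (p : ℕ) + 1 = (q : ℕ) ∨ (q : ℕ) + 1 = (p : ℕ) then 1 else 0)
    (Bk1 : Matrix (Fin k) (Fin k) R)
    (hBk1 : ∀ p q : Fin k, Bk1 p q =
      if p = q then (if (p : ℕ) = 0 then α else 2)
      else if (p : ℕ) + 1 = (q : ℕ) ∨ (q : ℕ) + 1 = (p : ℕ) then 1 else 0) :
    J.charpoly
      = -Polynomial.C (Polynomial.X ^ 2 : Polynomial R)
            * (Bk.charpoly.map Polynomial.C + Bk1.charpoly.map Polynomial.C)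
        + Polynomial.X * Bk.charpoly.map Polynomial.C := by
  classical
  have e1 : ∀ i j : Fin (k+1),
      charmatrix J i.castSucc j.castSucc = charmatrix (Bk.map Polynomial.C) i j := by
    intro i j
    have hi := i.isLt
    by_cases hij : i = j
    · subst hij
      rw [charmatrix_apply_eq, charmatrix_apply_eq, hJ, Matrix.map_apply, hBk,
        if_pos rfl, if_pos rfl]
      simp only [Fin.coe_castSucc]
      split_ifs with h0 h1
      · simp
      · omega
      · simp [map_ofNat]
    · have hij' : i.castSucc ≠ j.castSucc := by simpa [Fin.castSucc_inj] using hij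
      rw [charmatrix_apply_ne _ _ _ hij', charmatrix_apply_ne _ _ _ hij, hJ,
        Matrix.map_apply, hBk, if_neg hij', if_neg hij]
      simp only [Fin.coe_castSucc]
      have hj := j.isLt
      split_ifs with hadj hk1
      · omega
      · simp
      · simp
  have e2 : ∀ i j : Fin k,
      charmatrix (Bk.map Polynomial.C) i.castSucc j.castSucc
        = charmatrix (Bk1.map Polynomial.C) i j := by
    intro i j
    have hent : Bk i.castSucc j.castSucc = Bk1 i j := by
      rw [hBk, hBk1]
      simp only [Fin.coe_castSucc, Fin.castSucc_inj]
    by_cases hij : i = j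
    · subst hij
      rw [charmatrix_apply_eq, charmatrix_apply_eq, Matrix.map_apply, Matrix.map_apply, hent]
    · have hij' : i.castSucc ≠ j.castSucc := by simpa [Fin.castSucc_inj] using hij
      rw [charmatrix_apply_ne _ _ _ hij', charmatrix_apply_ne _ _ _ hij,
        Matrix.map_apply, Matrix.map_apply, hent]
  set A := charmatrix J with hA
  have hdet : J.charpoly = A.det := rfl
  rw [hdet, Matrix.det_succ_row A (Fin.last (k+1))]
  rw [Fin.sum_univ_castSucc, Fin.sum_univ_castSucc]
  -- zero terms in the first sum
  have hz : ∀ j : Fin k, A (Fin.last (k+1)) ((j.castSucc).castSucc) = 0 := by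
    intro j
    have hj := j.isLt
    have hne : Fin.last (k+1) ≠ (j.castSucc).castSucc := by
      simp only [ne_eq, Fin.ext_iff, Fin.val_last, Fin.coe_castSucc]; omega
    rw [hA, charmatrix_apply_ne _ _ _ hne, hJ, if_neg hne, if_neg]
    · simp
    · simp only [Fin.val_last, Fin.coe_castSucc]; omega
  rw [Finset.sum_eq_zero (fun j _ => by rw [hz j]; ring)]
  -- entries on the last row
  have haLK : A (Fin.last (k+1)) ((Fin.last k).castSucc)
      = -Polynomial.C (Polynomial.X : Polynomial R) := by
    have hne : Fin.last (k+1) ≠ (Fin.last k).castSucc := by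
      simp [ne_eq, Fin.ext_iff]
    rw [hA, charmatrix_apply_ne _ _ _ hne, hJ, if_neg hne, if_pos, if_pos]
    · simp
    · simp
  have haLL : A (Fin.last (k+1)) (Fin.last (k+1))
      = Polynomial.X - Polynomial.C ((Polynomial.X : Polynomial R) ^ 2) := by
    rw [hA, charmatrix_apply_eq, hJ, if_pos rfl, if_neg (by simp), if_pos (by simp)]
  -- the minor at the (last,last) position
  have hdM1 : (A.submatrix (Fin.last (k+1)).succAbove (Fin.last (k+1)).succAbove).det
      = Bk.charpoly.map Polynomial.C := by
    have hM1 : A.submatrix (Fin.last (k+1)).succAbove (Fin.last (k+1)).succAbove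
        = charmatrix (Bk.map Polynomial.C) := by
      funext i j
      rw [Fin.succAbove_last, submatrix_apply, e1]
    rw [hM1]
    exact Matrix.charpoly_map Bk (Polynomial.C : R →+* Polynomial R)
  -- the minor at the (last, k) position
  set N := A.submatrix (Fin.last (k+1)).succAbove ((Fin.last k).castSucc).succAbove with hN
  have sA1 : ((Fin.last k).castSucc : Fin (k+2)).succAbove (Fin.last k) = Fin.last (k+1) := by
    rw [Fin.succAbove_of_le_castSucc _ _ le_rfl, Fin.succ_last]
  have sA2 : ∀ j : Fin k,
      ((Fin.last k).castSucc : Fin (k+2)).succAbove j.castSucc = (j.castSucc).castSucc := by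
    intro j
    refine Fin.succAbove_of_castSucc_lt _ _ ?_
    rw [Fin.lt_def]
    simp only [Fin.coe_castSucc, Fin.val_last]
    exact j.isLt
  have hNcol : ∀ i : Fin k, N i.castSucc (Fin.last k) = 0 := by
    intro i
    have hi := i.isLt
    rw [hN, submatrix_apply, Fin.succAbove_last, sA1, hA]
    have hne : ((i.castSucc).castSucc : Fin (k+2)) ≠ Fin.last (k+1) := by
      simp only [ne_eq, Fin.ext_iff, Fin.val_last, Fin.coe_castSucc]; omega
    rw [charmatrix_apply_ne _ _ _ hne, hJ, if_neg hne, if_neg]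
    · simp
    · simp only [Fin.val_last, Fin.coe_castSucc]; omega
  have hNLL : N (Fin.last k) (Fin.last k) = -Polynomial.C (Polynomial.X : Polynomial R) := by
    rw [hN, submatrix_apply, Fin.succAbove_last, sA1, hA]
    have hne : ((Fin.last k).castSucc : Fin (k+2)) ≠ Fin.last (k+1) := by
      simp [ne_eq, Fin.ext_iff]
    rw [charmatrix_apply_ne _ _ _ hne, hJ, if_neg hne, if_pos, if_pos]
    · simp
    · simp
  have hdM2 : (N.submatrix (Fin.last k).succAbove (Fin.last k).succAbove).det
      = Bk1.charpoly.map Polynomial.C := by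
    have hM2 : N.submatrix (Fin.last k).succAbove (Fin.last k).succAbove
        = charmatrix (Bk1.map Polynomial.C) := by
      funext i j
      rw [Fin.succAbove_last, submatrix_apply, hN, submatrix_apply, Fin.succAbove_last, sA2,
        e1, e2]
    rw [hM2]
    exact Matrix.charpoly_map Bk1 (Polynomial.C : R →+* Polynomial R)
  -- expand det N along its last column
  have hdetN : N.det = -(Polynomial.C (Polynomial.X : Polynomial R)
      * (Bk1.charpoly.map Polynomial.C)) := by
    rw [Matrix.det_succ_column N (Fin.last k)]
    rw [Fin.sum_univ_castSucc]
    rw [Finset.sum_eq_zero (fun i _ => by rw [hNcol i]; ring)]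
    rw [hNLL, hdM2]
    have hval : ((Fin.last k : Fin (k+1)) : ℕ) + ((Fin.last k : Fin (k+1)) : ℕ) = 2 * k := by
      simp only [Fin.val_last]; ring
    rw [hval]
    have hsgn : ((-1 : Polynomial (Polynomial R)) ^ (2*k)) = 1 := by
      exact Even.neg_one_pow (α := Polynomial (Polynomial R)) ⟨k, two_mul k⟩
    rw [hsgn]
    ring
  rw [haLK, haLL, hdM1, hdetN]
  have hv1 : ((Fin.last (k+1) : Fin (k+2)) : ℕ) + (((Fin.last k).castSucc : Fin (k+2)) : ℕ)
      = 2*k + 1 := by simp only [Fin.val_last, Fin.coe_castSucc]; ring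
  have hv2 : ((Fin.last (k+1) : Fin (k+2)) : ℕ) + ((Fin.last (k+1) : Fin (k+2)) : ℕ)
      = 2*(k+1) := by simp only [Fin.val_last]; ring
  rw [hv1, hv2]
  have hsgn1 : ((-1 : Polynomial (Polynomial R)) ^ (2*k+1)) = -1 := by
    exact Odd.neg_one_pow (α := Polynomial (Polynomial R)) ⟨k, rfl⟩
  have hsgn2 : ((-1 : Polynomial (Polynomial R)) ^ (2*(k+1))) = 1 := by
    exact Even.neg_one_pow (α := Polynomial (Polynomial R)) ⟨k+1, two_mul (k+1)⟩
  rw [hsgn1, hsgn2]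
  rw [show Polynomial.C ((Polynomial.X : Polynomial R)^2)
      = (Polynomial.C (Polynomial.X : Polynomial R))^2 from map_pow _ _ _]
  ring
end

section
/- Let k ≥ 1 and let α ≥ 2 be an integer. Let J_k(α, y) be the (k+2)×(k+2) tridiagonal matrix over ℤ[y] with diagonal entries (α, 2, 2, …, 2, y²), sub- and super-diagonal entries (1, 1, …, 1, y), and all other entries 0. Then the characteristic polynomial of J_k(α, y), regarded as an element of ℤ[t, y], is irreducible. -/
open Polynomial Matrix

/-!
Expanding along the last row, the characteristic polynomial is
`(t - y²) P_{k+1}(t) - y² P_k(t)`, where `P_n` is the characteristic polynomial of the leading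
`n × n` block. As a quadratic in `y` over `ℤ[t]` it reads `t P_{k+1} - (P_{k+1} + P_k) y²`. Its
coefficients are relatively prime (consecutive `P_n` are coprime, and `P_{k+1} + P_k` does not
vanish at `t = 0` because `α ≠ 1`), so a factorisation would have to be into two factors linear
in `y`, making `t P_{k+1} / (P_{k+1} + P_k)` a square in `ℚ(t)`. That is impossible: the
numerator vanishes to order one at `t = 0`, the denominator not at all.
-/

namespace Matrix

variable {R : Type*} [CommRing R]

def tridiagonal (d u l : ℕ → R) (n : ℕ) : Matrix (Fin n) (Fin n) R :=
  of fun i j =>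
    if (i : ℕ) = j then d i
    else if (i : ℕ) + 1 = j then u i
    else if (j : ℕ) + 1 = i then l j
    else 0

variable (d u l : ℕ → R)

theorem tridiagonal_apply_self {n : ℕ} (i : Fin n) : tridiagonal d u l n i i = d i := by
  simp [tridiagonal]

theorem tridiagonal_apply_of_succ_eq {n : ℕ} {i j : Fin n} (h : (i : ℕ) + 1 = j) :
    tridiagonal d u l n i j = u i := by
  simp only [tridiagonal, of_apply]
  rw [if_neg (by omega), if_pos h]

theorem tridiagonal_apply_of_eq_succ {n : ℕ} {i j : Fin n} (h : (j : ℕ) + 1 = i) :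
    tridiagonal d u l n i j = l j := by
  simp only [tridiagonal, of_apply]
  rw [if_neg (by omega), if_neg (by omega), if_pos h]

theorem tridiagonal_apply_eq_zero {n : ℕ} {i j : Fin n}
    (h : (i : ℕ) + 1 < j ∨ (j : ℕ) + 1 < i) : tridiagonal d u l n i j = 0 := by
  simp only [tridiagonal, of_apply]
  rw [if_neg (by omega), if_neg (by omega), if_neg (by omega)]

theorem tridiagonal_submatrix_castSucc (n : ℕ) :
    (tridiagonal d u l (n + 1)).submatrix Fin.castSucc Fin.castSucc = tridiagonal d u l n := by
  ext i j
  simp [tridiagonal]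

theorem det_tridiagonal_submatrix_castSucc_succAbove (n : ℕ) :
    ((tridiagonal d u l (n + 2)).submatrix Fin.castSucc
      (Fin.last n).castSucc.succAbove).det = u n * (tridiagonal d u l n).det := by
  have hcol : (Fin.last n).castSucc.succAbove ∘ Fin.castSucc = Fin.castSucc ∘ Fin.castSucc := by
    ext i
    simp [Fin.succAbove_of_castSucc_lt _ _ (Fin.castSucc_lt_last i)]
  rw [det_succ_column _ (Fin.last n), Fin.sum_univ_castSucc, Finset.sum_eq_zero, zero_add,
    submatrix_submatrix, Fin.succAbove_last, hcol, ← submatrix_submatrix,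
    tridiagonal_submatrix_castSucc, tridiagonal_submatrix_castSucc, submatrix_apply,
    tridiagonal_apply_of_succ_eq _ _ _ (by simp)]
  · simp [← two_mul]
  · intro i _
    rw [submatrix_apply, tridiagonal_apply_eq_zero _ _ _ (by simp)]
    ring

theorem det_tridiagonal_succ_succ (n : ℕ) :
    (tridiagonal d u l (n + 2)).det =
      d (n + 1) * (tridiagonal d u l (n + 1)).det - u n * l n * (tridiagonal d u l n).det := by
  rw [det_succ_row _ (Fin.last _), Fin.sum_univ_castSucc, Fin.sum_univ_castSucc,
    Finset.sum_eq_zero, zero_add, Fin.succAbove_last, tridiagonal_submatrix_castSucc,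
    det_tridiagonal_submatrix_castSucc_succAbove, tridiagonal_apply_self,
    tridiagonal_apply_of_eq_succ _ _ _ (by simp)]
  · simp only [Fin.val_last, Fin.val_castSucc, odd_add_one_self, Odd.neg_one_pow, neg_mul, one_mul,
      Even.add_self, Even.neg_pow, one_pow]
    ring
  · intro i _
    rw [tridiagonal_apply_eq_zero _ _ _ (by simp)]
    ring

theorem charmatrix_tridiagonal (n : ℕ) :
    charmatrix (tridiagonal d u l n) =
      tridiagonal (fun i => X - C (d i)) (fun i => -C (u i)) (fun i => -C (l i)) n := by
  ext i j : 1
  by_cases hij : i = j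
  · subst hij
    rw [charmatrix_apply_eq, tridiagonal_apply_self, tridiagonal_apply_self]
  · rw [charmatrix_apply_ne _ _ _ hij]
    simp only [tridiagonal, Fin.val_inj, of_apply, hij, ↓reduceIte]
    split_ifs <;> simp

theorem charpoly_tridiagonal_succ_succ (n : ℕ) :
    (tridiagonal d u l (n + 2)).charpoly =
      (X - C (d (n + 1))) * (tridiagonal d u l (n + 1)).charpoly -
        C (u n) * C (l n) * (tridiagonal d u l n).charpoly := by
  simp only [charpoly, charmatrix_tridiagonal, det_tridiagonal_succ_succ, neg_mul_neg]

end Matrix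

namespace Polynomial

theorem rootMultiplicity_mod_two_eq_of_sq_mul_eq_sq_mul {R : Type*} [CommRing R] [IsDomain R]
    {a b p q : R[X]} (x : R) (ha : a ≠ 0) (hp : p ≠ 0) (h : a ^ 2 * p = b ^ 2 * q) :
    rootMultiplicity x p % 2 = rootMultiplicity x q % 2 := by
  have hl : a ^ 2 * p ≠ 0 := mul_ne_zero (pow_ne_zero 2 ha) hp
  have hr : b ^ 2 * q ≠ 0 := h ▸ hl
  have hb : b ≠ 0 := fun hb => hr (by simp [hb])
  have hm := congrArg (rootMultiplicity x) h
  rw [rootMultiplicity_mul hl, rootMultiplicity_mul hr, sq, sq,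
    rootMultiplicity_mul (mul_ne_zero ha ha), rootMultiplicity_mul (mul_ne_zero hb hb)] at hm
  omega

variable {R : Type*} [CommRing R]

theorem isPrimitive_C_sub_C_mul_X_sq {u A : R} (h : IsRelPrime u A) :
    (C u - C A * X ^ 2).IsPrimitive := by
  refine isPrimitive_iff_isUnit_of_C_dvd.mpr fun r hr => ?_
  rw [C_dvd_iff_dvd_coeff] at hr
  exact h (by simpa using hr 0) (by simpa using hr 2)

theorem sq_mul_eq_sq_mul_of_mul_eq_C_sub_C_mul_X_sq {a b c d u A : R}
    (h : (C a * X + C b) * (C c * X + C d) = C u - C A * X ^ 2) :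
    a ^ 2 * u = b ^ 2 * A := by
  have hexp : (C a * X + C b) * (C c * X + C d) =
      C (a * c) * X ^ 2 + C (a * d + b * c) * X + C (b * d) := by
    simp only [C_mul, C_add]
    ring
  rw [hexp] at h
  have h0 := congrArg (coeff · 0) h
  have h1 := congrArg (coeff · 1) h
  have h2 := congrArg (coeff · 2) h
  simp only [coeff_add, coeff_sub, coeff_C_mul, coeff_X_pow, coeff_X, coeff_C] at h0 h1 h2
  norm_num at h0 h1 h2
  linear_combination (-a ^ 2) * h0 + a * b * h1 + (-b ^ 2) * h2

theorem irreducible_C_sub_C_mul_X_sq [IsDomain R] {u A : R} (hA : A ≠ 0) (hrel : IsRelPrime u A)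
    (hsq : ∀ a b : R, a ≠ 0 → a ^ 2 * u ≠ b ^ 2 * A) : Irreducible (C u - C A * X ^ 2) := by
  set q := C u - C A * X ^ 2
  have hq : q.IsPrimitive := isPrimitive_C_sub_C_mul_X_sq hrel
  have hdeg : q.natDegree = 2 := by
    rw [natDegree_sub_eq_right_of_natDegree_lt] <;> rw [natDegree_C_mul_X_pow 2 A hA]
    simp
  have hconst : ∀ f, f ∣ q → f.natDegree = 0 → IsUnit f := fun f hf h0 => by
    rw [eq_C_of_natDegree_eq_zero h0] at hf ⊢
    exact isUnit_C.mpr (isPrimitive_iff_isUnit_of_C_dvd.mp hq _ hf)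
  refine ⟨fun hu => by simpa [hdeg] using natDegree_eq_zero_of_isUnit hu, fun f g hfg => ?_⟩
  have hsum : f.natDegree + g.natDegree = 2 := by
    rw [← natDegree_mul (left_ne_zero_of_mul (hfg ▸ hq.ne_zero))
      (right_ne_zero_of_mul (hfg ▸ hq.ne_zero)), ← hfg, hdeg]
  by_cases hf0 : f.natDegree = 0
  · exact .inl (hconst f (hfg ▸ dvd_mul_right f g) hf0)
  by_cases hg0 : g.natDegree = 0
  · exact .inr (hconst g (hfg ▸ dvd_mul_left g f) hg0)
  have hf1 : f.natDegree = 1 := by omega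
  rw [eq_X_add_C_of_natDegree_le_one hf1.le,
    eq_X_add_C_of_natDegree_le_one (by omega : g.natDegree ≤ 1)] at hfg
  refine absurd (sq_mul_eq_sq_mul_of_mul_eq_C_sub_C_mul_X_sq hfg.symm) (hsq _ _ ?_)
  rw [← hf1]
  exact leadingCoeff_ne_zero.mpr fun h => by simp [h] at hf1

end Polynomial

open scoped Polynomial.Bivariate

/-- For `n ≤ k + 1`, the characteristic polynomial of the leading `n × n` block of `J_k(α, y)`
(diagonal `α, 2, 2, …`, off-diagonal entries `1`). -/
noncomputable def jacobiCharpoly (α : ℤ) : ℕ → ℤ[X]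
  | 0 => 1
  | 1 => X - C α
  | n + 2 => (X - 2) * jacobiCharpoly α (n + 1) - jacobiCharpoly α n

namespace jacobiCharpoly

variable (α : ℤ)

theorem eval_zero : ∀ n : ℕ, (jacobiCharpoly α n).eval 0 = (-1) ^ n * (1 + n * (α - 1))
  | 0 => by simp [jacobiCharpoly]
  | 1 => by simp [jacobiCharpoly]
  | n + 2 => by
    simp only [jacobiCharpoly, eval_sub, eval_mul, eval_X, eval_ofNat, eval_zero n,
      eval_zero (n + 1)]
    push_cast
    ring

theorem isCoprime_succ : ∀ n : ℕ, IsCoprime (jacobiCharpoly α (n + 1)) (jacobiCharpoly α n)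
  | 0 => by simp [jacobiCharpoly, isCoprime_one_right]
  | n + 1 => by
    simpa [jacobiCharpoly, sub_eq_add_neg, add_comm] using
      ((isCoprime_succ n).symm.neg_left).add_mul_right_left (X - 2)

variable {α}

theorem eval_zero_ne_zero (hα : 1 ≤ α) (n : ℕ) : (jacobiCharpoly α n).eval 0 ≠ 0 := by
  rw [eval_zero]
  exact mul_ne_zero (pow_ne_zero _ (by norm_num)) (by positivity)

theorem eval_zero_succ_add_ne_zero (hα : α ≠ 1) (n : ℕ) :
    (jacobiCharpoly α (n + 1) + jacobiCharpoly α n).eval 0 ≠ 0 := by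
  have h : (jacobiCharpoly α (n + 1) + jacobiCharpoly α n).eval 0 = (-1) ^ n * (1 - α) := by
    rw [eval_add, eval_zero, eval_zero]
    push_cast
    ring
  rw [h]
  exact mul_ne_zero (pow_ne_zero _ (by norm_num)) (sub_ne_zero.mpr hα.symm)

theorem isRelPrime_X_mul_succ_add (hα : α ≠ 1) (n : ℕ) :
    IsRelPrime (X * jacobiCharpoly α (n + 1))
      (jacobiCharpoly α (n + 1) + jacobiCharpoly α n) := by
  refine IsRelPrime.mul_left ?_ ?_
  · refine irreducible_X.isRelPrime_iff_not_dvd.mpr ?_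
    rw [X_dvd_iff, coeff_zero_eq_eval_zero]
    exact eval_zero_succ_add_ne_zero hα n
  · have h := ((isCoprime_succ α n).add_mul_left_right 1).isRelPrime
    rwa [mul_one, add_comm (jacobiCharpoly α n)] at h

theorem sq_mul_X_mul_succ_ne_sq_mul_succ_add (hα : 2 ≤ α) (n : ℕ) (a b : ℤ[X])
    (ha : a ≠ 0) :
    a ^ 2 * (X * jacobiCharpoly α (n + 1)) ≠
      b ^ 2 * (jacobiCharpoly α (n + 1) + jacobiCharpoly α n) := by
  intro h
  have hP := eval_zero_ne_zero (by omega : 1 ≤ α) (n + 1)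
  have hX : rootMultiplicity 0 (X : ℤ[X]) = 1 := by
    simpa using rootMultiplicity_X_sub_C_self (x := (0 : ℤ))
  have hXP : X * jacobiCharpoly α (n + 1) ≠ 0 := mul_ne_zero X_ne_zero fun h => hP (by simp [h])
  have hparity := rootMultiplicity_mod_two_eq_of_sq_mul_eq_sq_mul 0 ha hXP h
  rw [rootMultiplicity_mul hXP, hX, rootMultiplicity_eq_zero hP,
    rootMultiplicity_eq_zero (eval_zero_succ_add_ne_zero (by omega) n)] at hparity
  omega

end jacobiCharpoly

/-- `jacobiMatrix α k (k + 2)` is `J_k(α, y)`; for `n ≤ k + 1`, `jacobiMatrix α k n` is its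
leading `n × n` block. -/
noncomputable def jacobiMatrix (α : ℤ) (k n : ℕ) : Matrix (Fin n) (Fin n) ℤ[X] :=
  tridiagonal (fun i => if i = 0 then C α else if i = k + 1 then X ^ 2 else 2)
    (fun i => if i = k then X else 1) (fun i => if i = k then X else 1) n

theorem charpoly_jacobiMatrix_of_le (α : ℤ) (k : ℕ) :
    ∀ n ≤ k + 1, (jacobiMatrix α k n).charpoly = (jacobiCharpoly α n).map C
  | 0, _ => by simp [jacobiCharpoly, charpoly_isEmpty]
  | 1, _ => by simp [jacobiCharpoly, jacobiMatrix, charpoly, tridiagonal_apply_self]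
  | n + 2, hn => by
    rw [jacobiMatrix, charpoly_tridiagonal_succ_succ, ← jacobiMatrix, ← jacobiMatrix,
      charpoly_jacobiMatrix_of_le α k (n + 1) (by omega),
      charpoly_jacobiMatrix_of_le α k n (by omega),
      if_neg (by omega), if_neg (by omega), if_neg (by omega), jacobiCharpoly]
    simp [C_ofNat]

theorem charpoly_jacobiMatrix (α : ℤ) (k : ℕ) :
    (jacobiMatrix α k (k + 2)).charpoly =
      (Y - C X ^ 2) * (jacobiCharpoly α (k + 1)).map C -
        C X ^ 2 * (jacobiCharpoly α k).map C := by
  rw [jacobiMatrix, charpoly_tridiagonal_succ_succ, ← jacobiMatrix, ← jacobiMatrix,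
    charpoly_jacobiMatrix_of_le α k (k + 1) le_rfl, charpoly_jacobiMatrix_of_le α k k (by omega),
    if_neg (by omega), if_pos rfl, if_pos rfl, C_pow]
  ring

theorem swap_charpoly_jacobiMatrix (α : ℤ) (k : ℕ) :
    Bivariate.swap (jacobiMatrix α k (k + 2)).charpoly =
      C (X * jacobiCharpoly α (k + 1)) -
        C (jacobiCharpoly α (k + 1) + jacobiCharpoly α k) * Y ^ 2 := by
  simp only [charpoly_jacobiMatrix, map_sub, map_mul, map_pow, Bivariate.swap_X, Bivariate.swap_Y,
    Bivariate.swap_map_C, C_add]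
  ring

theorem irreducible_charpoly_jacobi_matrix_general
    (k : ℕ) (α : ℤ) (hα : 2 ≤ α)
    (J : Matrix (Fin (k + 2)) (Fin (k + 2)) (Polynomial ℤ))
    (hJ : ∀ p q : Fin (k + 2), J p q =
      if p = q then
        (if (p : ℕ) = 0 then Polynomial.C α
         else if (p : ℕ) = k + 1 then Polynomial.X ^ 2 else 2)
      else if (p : ℕ) + 1 = (q : ℕ) ∨ (q : ℕ) + 1 = (p : ℕ) then
        (if (p : ℕ) = k + 1 ∨ (q : ℕ) = k + 1 then Polynomial.X else 1)
      else 0) :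
    Irreducible J.charpoly := by
  have hJ' : J = jacobiMatrix α k (k + 2) := by
    ext p q : 1
    rw [hJ, jacobiMatrix, tridiagonal, of_apply]
    simp only [Fin.ext_iff]
    have := p.isLt
    have := q.isLt
    split_ifs <;> first | rfl | omega
  have hα1 : α ≠ 1 := by omega
  have hA : jacobiCharpoly α (k + 1) + jacobiCharpoly α k ≠ 0 := fun h =>
    jacobiCharpoly.eval_zero_succ_add_ne_zero hα1 k (by simp [h])
  rw [hJ', ← MulEquiv.irreducible_iff Bivariate.swap, swap_charpoly_jacobiMatrix]
  exact irreducible_C_sub_C_mul_X_sq hA (jacobiCharpoly.isRelPrime_X_mul_succ_add hα1 k)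
    (jacobiCharpoly.sq_mul_X_mul_succ_ne_sq_mul_succ_add hα k)

/-- For `k ≥ 1` and an integer `α ≥ 2`, the characteristic polynomial of the
`(k+2) × (k+2)` tridiagonal matrix over `ℤ[y]` with diagonal `(α, 2, …, 2, y²)` and
sub/super-diagonal entries `(1, …, 1, y)` is irreducible as an element of
`ℤ[t, y] = (ℤ[y])[t]`. -/
theorem irreducible_charpoly_jacobi_matrix
    (k : ℕ) (hk : 1 ≤ k) (α : ℤ) (hα : 2 ≤ α)
    (J : Matrix (Fin (k + 2)) (Fin (k + 2)) (Polynomial ℤ))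
    (hJ : ∀ p q : Fin (k + 2), J p q =
      if p = q then
        (if (p : ℕ) = 0 then Polynomial.C α
         else if (p : ℕ) = k + 1 then Polynomial.X ^ 2 else 2)
      else if (p : ℕ) + 1 = (q : ℕ) ∨ (q : ℕ) + 1 = (p : ℕ) then
        (if (p : ℕ) = k + 1 ∨ (q : ℕ) = k + 1 then Polynomial.X else 1)
      else 0) :
    Irreducible J.charpoly :=
  irreducible_charpoly_jacobi_matrix_general k α hα J hJ
end

section
/- Let g ≥ 3 and let D_g(y) be the g×g tridiagonal matrix over ℤ[y] with diagonal entries (y², 2, 2, …, 2, 1), all sub- and super-diagonal entries equal to 1, and all other entries 0. Then the characteristic polynomial of D_g(y), regarded as an element of ℤ[t, y], is irreducible. -/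
open Polynomial Matrix

namespace StaircaseAux

noncomputable def p : ℕ → Polynomial ℤ
  | 0 => 1
  | 1 => X - 1
  | (k+2) => (X - 2) * p (k+1) - p k

lemma p_zero : p 0 = 1 := rfl
lemma p_one : p 1 = X - 1 := rfl
lemma p_rec (k : ℕ) : p (k+2) = (X - 2) * p (k+1) - p k := rfl

lemma monic_X_sub_two : ((X : Polynomial ℤ) - 2).Monic := by
  simpa using monic_X_sub_C (2 : ℤ)

lemma p_monic_deg : ∀ k, ((p k).Monic ∧ (p k).natDegree = k) := by
  have key : ∀ k, ((p k).Monic ∧ (p k).natDegree = k) ∧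
      ((p (k+1)).Monic ∧ (p (k+1)).natDegree = k+1) := by
    intro k
    induction k with
    | zero =>
      refine ⟨⟨monic_one, natDegree_one⟩, ?_, ?_⟩
      · rw [p_one]; simpa using monic_X_sub_C (1 : ℤ)
      · rw [p_one]; simpa using natDegree_X_sub_C (1 : ℤ)
    | succ n ih =>
      have hq : ((X - 2) * p (n+1)).Monic := monic_X_sub_two.mul ih.2.1
      have hd1 : ((X : Polynomial ℤ) - 2).natDegree = 1 := by
        simpa using natDegree_X_sub_C (2 : ℤ)
      have hqd : ((X - 2) * p (n+1)).natDegree = n + 2 := by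
        rw [natDegree_mul monic_X_sub_two.ne_zero ih.2.1.ne_zero, ih.2.2, hd1]; omega
      have hlt : (p n).degree < ((X - 2) * p (n+1)).degree := by
        rw [degree_eq_natDegree hq.ne_zero, hqd]
        calc (p n).degree ≤ (n : WithBot ℕ) := by
              simpa [ih.1.2] using degree_le_natDegree (p := p n)
          _ < ((n+2 : ℕ) : WithBot ℕ) := by exact_mod_cast by omega
      refine ⟨ih.2, ?_, ?_⟩
      · rw [p_rec, sub_eq_add_neg]
        exact hq.add_of_left (by rwa [degree_neg])
      · rw [p_rec, natDegree_eq_of_degree_eq (degree_sub_eq_left_of_degree_lt hlt), hqd]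
  exact fun k => (key k).1

lemma p_coprime : ∀ k (c : Polynomial ℤ), c ∣ p (k+1) → c ∣ p k → IsUnit c := by
  intro k
  induction k with
  | zero => intro c _ h0; exact isUnit_of_dvd_one (by simpa [p_zero] using h0)
  | succ n ih =>
    intro c h2 h1
    refine ih c h1 ?_
    have : p n = (X - 2) * p (n+1) - p (n+2) := by rw [p_rec]; ring
    rw [this]
    exact dvd_sub (h1.mul_left _) h2


/-- Laplace-expansion step for “tridiagonal-headed” matrices. -/
lemma det_step {S : Type*} [CommRing S] {k : ℕ} (A : Matrix (Fin (k+2)) (Fin (k+2)) S) (a : S)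
    (h00 : A 0 0 = a) (h01 : A 0 1 = -1) (h0j : ∀ j : Fin k, A 0 j.succ.succ = 0)
    (h10 : A 1 0 = -1) (hi0 : ∀ i : Fin k, A i.succ.succ 0 = 0) :
    A.det = a * (A.submatrix Fin.succ Fin.succ).det
      - (A.submatrix (Fin.succ ∘ Fin.succ) (Fin.succ ∘ Fin.succ)).det := by
  have hB : (A.submatrix Fin.succ (Fin.succAbove 1)).det
      = - (A.submatrix (Fin.succ ∘ Fin.succ) (Fin.succ ∘ Fin.succ)).det := by
    set B := A.submatrix Fin.succ (Fin.succAbove 1) with hBdef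
    rw [det_succ_column_zero, Fin.sum_univ_succ]
    have hz : ∀ i : Fin k,
        (-1 : S) ^ (↑(Fin.succ i) : ℕ) * B i.succ 0 * (B.submatrix (Fin.succ i).succAbove Fin.succ).det = 0 := by
      intro i
      have : B i.succ 0 = 0 := by
        show A i.succ.succ ((1 : Fin (k+2)).succAbove 0) = 0
        rw [show (1 : Fin (k+2)).succAbove 0 = 0 from by
          rw [Fin.succAbove_of_castSucc_lt] <;> simp]
        exact hi0 i
      rw [this]; ring
    rw [Finset.sum_eq_zero (fun i _ => hz i), add_zero]
    have hB00 : B 0 0 = -1 := by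
      show A 1 ((1 : Fin (k+2)).succAbove 0) = -1
      rw [show (1 : Fin (k+2)).succAbove 0 = 0 from by
        rw [Fin.succAbove_of_castSucc_lt] <;> simp]
      exact h10
    have hsub : B.submatrix (Fin.succAbove 0) Fin.succ
        = A.submatrix (Fin.succ ∘ Fin.succ) (Fin.succ ∘ Fin.succ) := by
      have hcomp : (Fin.succAbove (1 : Fin (k+2))) ∘ Fin.succ = Fin.succ ∘ Fin.succ := by
        funext j
        show (1 : Fin (k+2)).succAbove j.succ = j.succ.succ
        simpa using Fin.succ_succAbove_succ (0 : Fin (k+1)) j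
      rw [Fin.succAbove_zero, hBdef, submatrix_submatrix, hcomp]
    rw [hB00, hsub]
    simp
  rw [det_succ_row_zero, Fin.sum_univ_succ, Fin.sum_univ_succ]
  have hz2 : ∀ j : Fin k,
      (-1 : S) ^ (↑(Fin.succ (Fin.succ j)) : ℕ) * A 0 j.succ.succ
        * (A.submatrix Fin.succ (Fin.succ (Fin.succ j)).succAbove).det = 0 := by
    intro j; rw [h0j]; ring
  rw [Finset.sum_eq_zero (fun j _ => hz2 j), add_zero]
  rw [show Fin.succ (0 : Fin (k+1)) = 1 from rfl, h00, h01]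
  rw [show Fin.succAbove (0 : Fin (k+2)) = Fin.succ from Fin.succAbove_zero, hB]
  simp only [Fin.val_zero, Fin.val_one, pow_zero, pow_one, one_mul]
  ring

noncomputable def Nent (n i j : ℕ) : Polynomial ℤ :=
  if i = j then (if i = n - 1 then X - 1 else X - 2)
  else if i + 1 = j ∨ j + 1 = i then -1 else 0

noncomputable def Nmat (n : ℕ) : Matrix (Fin n) (Fin n) (Polynomial ℤ) :=
  Matrix.of fun i j => Nent n (i : ℕ) (j : ℕ)

lemma Nent_succ (n i j : ℕ) (hi : i < n) :
    Nent (n+1) (i+1) (j+1) = Nent n i j := by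
  unfold Nent
  split_ifs <;> first | rfl | omega

lemma Nmat_det : ∀ n, (Nmat n).det = p n := by
  have key : ∀ n, (Nmat n).det = p n ∧ (Nmat (n+1)).det = p (n+1) := by
    intro n
    induction n with
    | zero =>
      constructor
      · simp [det_fin_zero, p_zero]
      · rw [det_fin_one, p_one]
        show Nent 1 0 0 = X - 1
        simp [Nent]
    | succ n ih =>
      refine ⟨ih.2, ?_⟩
      have step := det_step (Nmat (n+2)) (X - 2)
        (by show Nent (n+2) 0 0 = X - 2; simp [Nent]; try omega)
        (by show Nent (n+2) 0 1 = -1; simp [Nent])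
        (by intro j; show Nent (n+2) 0 ((j:ℕ)+1+1) = 0; simp [Nent]; try omega)
        (by show Nent (n+2) 1 0 = -1; simp [Nent])
        (by intro i; show Nent (n+2) ((i:ℕ)+1+1) 0 = 0; simp [Nent]; try omega)
      have e1 : (Nmat (n+2)).submatrix Fin.succ Fin.succ = Nmat (n+1) := by
        funext i j
        show Nent (n+2) ((i:ℕ)+1) ((j:ℕ)+1) = Nent (n+1) i j
        exact Nent_succ (n+1) i j i.isLt
      have e2 : (Nmat (n+2)).submatrix (Fin.succ ∘ Fin.succ) (Fin.succ ∘ Fin.succ) = Nmat n := by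
        funext i j
        show Nent (n+2) ((i:ℕ)+1+1) ((j:ℕ)+1+1) = Nent n i j
        rw [Nent_succ (n+1) (i+1) (j+1) (by omega), Nent_succ n i j i.isLt]
      rw [step, e1, e2, ih.1, ih.2, p_rec]
  exact fun n => (key n).1


noncomputable def inn : Polynomial ℤ →+* Polynomial (Polynomial ℤ) :=
  eval₂RingHom ((C : Polynomial ℤ →+* Polynomial (Polynomial ℤ)).comp (C : ℤ →+* Polynomial ℤ)) X

noncomputable def σ : Polynomial (Polynomial ℤ) →+* Polynomial (Polynomial ℤ) :=
  eval₂RingHom inn (C X)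

lemma σ_C (a : Polynomial ℤ) : σ (C a) = inn a := by
  simp [σ, coe_eval₂RingHom, eval₂_C]

lemma σ_X : σ X = C X := by
  simp [σ, coe_eval₂RingHom, eval₂_X]

lemma inn_eq : inn = mapRingHom (C : ℤ →+* Polynomial ℤ) := by
  apply ringHom_ext
  · intro n
    simp [inn, coe_eval₂RingHom, eval₂_C, coe_mapRingHom]
  · simp [inn, coe_eval₂RingHom, eval₂_X, coe_mapRingHom]

lemma σ_map (q : Polynomial ℤ) : σ (q.map C) = C q := by
  have h1 : σ (q.map C) = eval₂ (inn.comp (C : ℤ →+* Polynomial ℤ)) (C X) q := by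
    rw [σ, coe_eval₂RingHom, eval₂_map]
  rw [h1, Subsingleton.elim (inn.comp (C : ℤ →+* Polynomial ℤ))
    ((C : Polynomial ℤ →+* Polynomial (Polynomial ℤ)).comp (C : ℤ →+* Polynomial ℤ)),
    ← hom_eval₂, eval₂_C_X]

lemma σ_σ (q : Polynomial (Polynomial ℤ)) : σ (σ q) = q := by
  have h : σ.comp σ = RingHom.id (Polynomial (Polynomial ℤ)) := by
    apply ringHom_ext
    · intro a
      show σ (σ (C a)) = C a
      rw [σ_C, inn_eq, coe_mapRingHom, σ_map]
    · show σ (σ X) = X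
      rw [σ_X, σ_C, inn_eq, coe_mapRingHom]
      simp
  calc σ (σ q) = (σ.comp σ) q := rfl
    _ = q := by rw [h]; rfl

noncomputable def σe : Polynomial (Polynomial ℤ) ≃+* Polynomial (Polynomial ℤ) :=
  { toFun := ⇑σ, invFun := ⇑σ, left_inv := σ_σ, right_inv := σ_σ,
    map_mul' := fun a b => map_mul σ a b, map_add' := fun a b => map_add σ a b }

lemma σe_apply (q : Polynomial (Polynomial ℤ)) : σe q = σ q := rfl

lemma irreducible_F (m : ℕ) :
    Irreducible (C (-(p (m+2))) * X^2 + C (X * p (m+2) - p (m+1)) : Polynomial (Polynomial ℤ)) := by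
  have hp2 := p_monic_deg (m+2)
  have hp1 := p_monic_deg (m+1)
  set A : Polynomial ℤ := -(p (m+2)) with hA
  set B : Polynomial ℤ := X * p (m+2) - p (m+1) with hB
  have hA0 : A ≠ 0 := by
    rw [hA, neg_ne_zero]; exact hp2.1.ne_zero
  have hXP : ((X : Polynomial ℤ) * p (m+2)).Monic := monic_X.mul hp2.1
  have hXPd : ((X : Polynomial ℤ) * p (m+2)).natDegree = m + 3 := by
    rw [natDegree_X_mul hp2.1.ne_zero, hp2.2]
  have hlt : (p (m+1)).degree < ((X : Polynomial ℤ) * p (m+2)).degree := by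
    rw [degree_eq_natDegree hXP.ne_zero, hXPd]
    calc (p (m+1)).degree ≤ ((m+1 : ℕ) : WithBot ℕ) := by
          simpa [hp1.2] using degree_le_natDegree (p := p (m+1))
      _ < ((m+3 : ℕ) : WithBot ℕ) := by exact_mod_cast by omega
  have hBm : B.Monic := by
    rw [hB, sub_eq_add_neg]
    exact hXP.add_of_left (by rwa [degree_neg])
  have hBd : B.natDegree = m + 3 := by
    rw [hB, natDegree_eq_of_degree_eq (degree_sub_eq_left_of_degree_lt hlt), hXPd]
  have hB0 : B ≠ 0 := hBm.ne_zero
  set F : Polynomial (Polynomial ℤ) := C A * X^2 + C B with hF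
  have hdegF : F.natDegree = 2 := by
    rw [hF, natDegree_add_eq_left_of_natDegree_lt, natDegree_C_mul_X_pow 2 A hA0]
    rw [natDegree_C_mul_X_pow 2 A hA0, natDegree_C]
    norm_num
  have hc2 : F.coeff 2 = A := by
    simp [hF, coeff_C_mul, coeff_X_pow, coeff_C]
  have hc1 : F.coeff 1 = 0 := by
    simp [hF, coeff_C_mul, coeff_X_pow, coeff_C]
  have hc0 : F.coeff 0 = B := by
    simp [hF, coeff_C_mul, coeff_X_pow, coeff_C]
  have hF0 : F ≠ 0 := by
    intro h
    exact hA0 (by rw [← hc2, h, coeff_zero])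
  constructor
  · exact not_isUnit_of_natDegree_pos _ (by rw [hdegF]; norm_num)
  · intro a b hab
    have ha0 : a ≠ 0 := by rintro rfl; rw [zero_mul] at hab; exact hF0 hab
    have hb0 : b ≠ 0 := by rintro rfl; rw [mul_zero] at hab; exact hF0 hab
    have hsum : a.natDegree + b.natDegree = 2 := by
      rw [← natDegree_mul ha0 hb0, ← hab, hdegF]
    have unit_of_dvd : ∀ c : Polynomial ℤ, c ∣ A → c ∣ B → IsUnit c := by
      intro c h2 h0
      have hdp2 : c ∣ p (m+2) := (dvd_neg).mp (hA ▸ h2)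
      have hdp1 : c ∣ p (m+1) := by
        have he : p (m+1) = X * p (m+2) - B := by rw [hB]; ring
        rw [he]
        exact dvd_sub (hdp2.mul_left X) h0
      exact p_coprime (m+1) c hdp2 hdp1
    by_cases hda : a.natDegree = 0
    · left
      obtain ⟨c, rfl⟩ : ∃ c, a = C c := ⟨a.coeff 0, eq_C_of_natDegree_eq_zero hda⟩
      have hdvd : ∀ n, c ∣ F.coeff n := by
        intro n
        rw [hab, coeff_C_mul]
        exact Dvd.intro _ rfl
      exact isUnit_C.mpr (unit_of_dvd c (hc2 ▸ hdvd 2) (hc0 ▸ hdvd 0))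
    by_cases hdb : b.natDegree = 0
    · right
      obtain ⟨c, rfl⟩ : ∃ c, b = C c := ⟨b.coeff 0, eq_C_of_natDegree_eq_zero hdb⟩
      have hdvd : ∀ n, c ∣ F.coeff n := by
        intro n
        rw [hab, coeff_mul_C]
        exact dvd_mul_left _ _
      exact isUnit_C.mpr (unit_of_dvd c (hc2 ▸ hdvd 2) (hc0 ▸ hdvd 0))
    · exfalso
      have hda1 : a.natDegree = 1 := by omega
      have hdb1 : b.natDegree = 1 := by omega
      have htop : a.coeff 1 * b.coeff 1 = A := by
        have h := coeff_mul_degree_add_degree a b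
        rw [hda1, hdb1] at h
        rw [← hc2, hab]
        rw [show (2 : ℕ) = 1 + 1 from rfl, h, leadingCoeff, leadingCoeff, hda1, hdb1]
      have hbot : a.coeff 0 * b.coeff 0 = B := by
        rw [← hc0, hab, mul_coeff_zero]
      have hmid0 : F.coeff 1 = (a*b).coeff 1 := by rw [hab]
      have hmid : a.coeff 0 * b.coeff 1 + a.coeff 1 * b.coeff 0 = 0 := by
        rw [hc1, coeff_mul, Finset.Nat.sum_antidiagonal_eq_sum_range_succ_mk] at hmid0
        simpa [Finset.sum_range_succ] using hmid0.symm
      have key : (a.coeff 0 * b.coeff 1)^2 = p (m+2) * B := by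
        linear_combination (a.coeff 0 * b.coeff 1) * hmid - (a.coeff 1 * b.coeff 1) * hbot
          - B * htop - B * hA
      have hPB : p (m+2) * B ≠ 0 := mul_ne_zero hp2.1.ne_zero hB0
      have hu0 : a.coeff 0 * b.coeff 1 ≠ 0 := by
        intro h
        rw [h] at key
        exact hPB (by rw [← key]; ring)
      have hdeg := congrArg natDegree key
      rw [natDegree_pow, natDegree_mul hp2.1.ne_zero hB0, hp2.2, hBd] at hdeg
      omega

end StaircaseAux

open StaircaseAux


/-- For `g ≥ 3`, the characteristic polynomial of the `g × g` tridiagonal matrix `D_g(y)`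
over `ℤ[y]` with diagonal `(y², 2, …, 2, 1)` and sub/super-diagonal entries `1` is
irreducible as an element of `ℤ[t, y] = (ℤ[y])[t]`. -/
theorem irreducible_charpoly_staircase_matrix
    (g : ℕ) (hg : 3 ≤ g)
    (D : Matrix (Fin g) (Fin g) (Polynomial ℤ))
    (hD : ∀ p q : Fin g, D p q =
      if p = q then
        (if (p : ℕ) = 0 then Polynomial.X ^ 2
         else if (p : ℕ) = g - 1 then 1 else 2)
      else if (p : ℕ) + 1 = (q : ℕ) ∨ (q : ℕ) + 1 = (p : ℕ) then 1 else 0) :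
    Irreducible D.charpoly := by
  obtain ⟨m, rfl⟩ : ∃ m, g = m + 3 := ⟨g - 3, by omega⟩
  classical
  -- entry facts
  have hval1 : ((1 : Fin (m+3)) : ℕ) = 1 := rfl
  have hne01 : (0 : Fin (m+3)) ≠ 1 := by
    intro h
    have := congrArg (Fin.val) h
    simp [hval1] at this
  have h00 : charmatrix D 0 0 = X - C ((X : Polynomial ℤ)^2) := by
    rw [charmatrix_apply_eq, hD]
    simp
  have h01 : charmatrix D 0 1 = -1 := by
    rw [charmatrix_apply_ne D _ _ hne01, hD]
    rw [if_neg hne01]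
    simp [hval1]
  have h0j : ∀ j : Fin (m+1), charmatrix D 0 j.succ.succ = 0 := by
    intro j
    have hne : (0 : Fin (m+3)) ≠ j.succ.succ := by
      intro h
      have := congrArg (Fin.val) h
      simp [Fin.val_succ] at this
    rw [charmatrix_apply_ne D _ _ hne, hD, if_neg hne]
    have : ¬(((0 : Fin (m+3)) : ℕ) + 1 = ((j.succ.succ : Fin (m+3)) : ℕ) ∨
        ((j.succ.succ : Fin (m+3)) : ℕ) + 1 = ((0 : Fin (m+3)) : ℕ)) := by
      simp [Fin.val_succ]
    rw [if_neg this]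
    simp
  have h10 : charmatrix D 1 0 = -1 := by
    rw [charmatrix_apply_ne D _ _ hne01.symm, hD, if_neg hne01.symm]
    simp [hval1]
  have hi0 : ∀ i : Fin (m+1), charmatrix D i.succ.succ 0 = 0 := by
    intro i
    have hne : (i.succ.succ : Fin (m+3)) ≠ 0 := by
      intro h
      have := congrArg (Fin.val) h
      simp [Fin.val_succ] at this
    rw [charmatrix_apply_ne D _ _ hne, hD, if_neg hne]
    have : ¬(((i.succ.succ : Fin (m+3)) : ℕ) + 1 = ((0 : Fin (m+3)) : ℕ) ∨
        ((0 : Fin (m+3)) : ℕ) + 1 = ((i.succ.succ : Fin (m+3)) : ℕ)) := by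
      simp [Fin.val_succ]
    rw [if_neg this]
    simp
  -- the submatrices
  have hψ2 : ∀ (q : Polynomial ℤ), Polynomial.map (C : ℤ →+* Polynomial ℤ) ((X : Polynomial ℤ) - 2) = X - 2 := by
    intro q; simp
  have hsub : ∀ (i j : Fin (m+2)), charmatrix D i.succ j.succ
      = Polynomial.map (C : ℤ →+* Polynomial ℤ) (Nent (m+2) (i : ℕ) (j : ℕ)) := by
    intro i j
    by_cases hij : i = j
    · subst hij
      rw [charmatrix_apply_eq, hD, if_pos rfl]
      have hne0 : ¬ ((i.succ : Fin (m+3)) : ℕ) = 0 := by simp [Fin.val_succ]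
      rw [if_neg hne0]
      by_cases hi : (i : ℕ) = m + 1
      · have e1 : ((i.succ : Fin (m+3)) : ℕ) = (m+3) - 1 := by simp [Fin.val_succ]; omega
        rw [if_pos e1]
        have e2 : Nent (m+2) (i : ℕ) (i : ℕ) = X - 1 := by
          simp [Nent, hi]
        rw [e2]
        simp
      · have e1 : ¬ ((i.succ : Fin (m+3)) : ℕ) = (m+3) - 1 := by simp [Fin.val_succ]; omega
        rw [if_neg e1]
        have e2 : Nent (m+2) (i : ℕ) (i : ℕ) = X - 2 := by
          simp [Nent, hi]
        rw [e2]
        simp [map_ofNat]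
    · have hij' : (i.succ : Fin (m+3)) ≠ j.succ := by
        intro h; exact hij (Fin.succ_injective _ h)
      rw [charmatrix_apply_ne D _ _ hij', hD, if_neg hij']
      by_cases hadj : ((i : ℕ) + 1 = (j : ℕ) ∨ (j : ℕ) + 1 = (i : ℕ))
      · have e1 : (((i.succ : Fin (m+3)) : ℕ) + 1 = ((j.succ : Fin (m+3)) : ℕ) ∨
            ((j.succ : Fin (m+3)) : ℕ) + 1 = ((i.succ : Fin (m+3)) : ℕ)) := by
          simp [Fin.val_succ]; omega
        rw [if_pos e1]
        have e2 : Nent (m+2) (i : ℕ) (j : ℕ) = -1 := by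
          have : ¬ (i : ℕ) = (j : ℕ) := fun h => hij (Fin.ext h)
          simp [Nent, this, hadj]
        rw [e2]
        simp
      · have e1 : ¬ (((i.succ : Fin (m+3)) : ℕ) + 1 = ((j.succ : Fin (m+3)) : ℕ) ∨
            ((j.succ : Fin (m+3)) : ℕ) + 1 = ((i.succ : Fin (m+3)) : ℕ)) := by
          simp [Fin.val_succ]; omega
        rw [if_neg e1]
        have e2 : Nent (m+2) (i : ℕ) (j : ℕ) = 0 := by
          have : ¬ (i : ℕ) = (j : ℕ) := fun h => hij (Fin.ext h)
          simp [Nent, this, hadj]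
        rw [e2]
        simp
  have hsub1 : (charmatrix D).submatrix Fin.succ Fin.succ
      = (mapRingHom (C : ℤ →+* Polynomial ℤ)).mapMatrix (Nmat (m+2)) := by
    funext i j
    rw [RingHom.mapMatrix_apply]
    show charmatrix D i.succ j.succ = Polynomial.map (C : ℤ →+* Polynomial ℤ) (Nent (m+2) (i:ℕ) (j:ℕ))
    exact hsub i j
  have hsub2 : (charmatrix D).submatrix (Fin.succ ∘ Fin.succ) (Fin.succ ∘ Fin.succ)
      = (mapRingHom (C : ℤ →+* Polynomial ℤ)).mapMatrix (Nmat (m+1)) := by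
    funext i j
    rw [RingHom.mapMatrix_apply]
    show charmatrix D i.succ.succ j.succ.succ
      = Polynomial.map (C : ℤ →+* Polynomial ℤ) (Nent (m+1) (i:ℕ) (j:ℕ))
    rw [show (i.succ.succ : Fin (m+3)) = (i.succ : Fin (m+2)).succ from rfl,
        show (j.succ.succ : Fin (m+3)) = (j.succ : Fin (m+2)).succ from rfl, hsub]
    rw [show ((i.succ : Fin (m+2)) : ℕ) = (i : ℕ) + 1 from rfl,
        show ((j.succ : Fin (m+2)) : ℕ) = (j : ℕ) + 1 from rfl]
    rw [Nent_succ (m+1) (i : ℕ) (j : ℕ) i.isLt]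
  have hchar : D.charpoly = (X - C ((X : Polynomial ℤ)^2)) * (p (m+2)).map (C : ℤ →+* Polynomial ℤ)
      - (p (m+1)).map (C : ℤ →+* Polynomial ℤ) := by
    have hd : D.charpoly = (charmatrix D).det := rfl
    rw [hd, det_step (charmatrix D) (X - C ((X : Polynomial ℤ)^2)) h00 h01 h0j h10 hi0,
        hsub1, hsub2, ← RingHom.map_det, ← RingHom.map_det, Nmat_det, Nmat_det]
    rfl

  rw [hchar]
  have hσ : σe ((X - C ((X : Polynomial ℤ)^2)) * (p (m+2)).map (C : ℤ →+* Polynomial ℤ)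
      - (p (m+1)).map (C : ℤ →+* Polynomial ℤ))
      = C (-(p (m+2))) * X^2 + C (X * p (m+2) - p (m+1)) := by
    rw [σe_apply]
    have e1 : σ ((X - C ((X : Polynomial ℤ)^2)) * (p (m+2)).map (C : ℤ →+* Polynomial ℤ)
        - (p (m+1)).map (C : ℤ →+* Polynomial ℤ))
        = (σ X - σ (C ((X : Polynomial ℤ)^2))) * σ ((p (m+2)).map (C : ℤ →+* Polynomial ℤ))
          - σ ((p (m+1)).map (C : ℤ →+* Polynomial ℤ)) := by
      simp only [_root_.map_sub, _root_.map_mul]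
    rw [e1, σ_X, σ_C, σ_map, σ_map, inn_eq, coe_mapRingHom]
    have e : Polynomial.map (C : ℤ →+* Polynomial ℤ) ((X : Polynomial ℤ)^2) = X^2 := by simp
    rw [e, C_neg, C_sub, C_mul]
    ring
  exact (MulEquiv.irreducible_iff (σe : Polynomial (Polynomial ℤ) ≃* Polynomial (Polynomial ℤ))).mp
    (hσ ▸ irreducible_F m)
end
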